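/- arXiv:2103.06751 — 7 statements merged into one kernel-verified Lean document; each statement's English description precedes it below -/
import Mathlib

section
/- There exists n₀ such that for all n ≥ n₀, setting d = log n / 300, for every natural number k ≤ n^{1/2} and every real p with log n/(4n) ≤ p ≤ 2 log n/n, we have ∑_{i=0}^{d} C(n,i) p^i (1-p)^{n-k} ≤ exp(-pn + (log n)/30). -/
/-!
Each term satisfies `C(n,i) p^i ≤ (np)^i / i!`. For any `c ≥ 1`, paying `c^i ≤ c^D` on each of
the terms `i ≤ D` divides the argument of the exponential series by `c`, so the partial sum is at
most `c^D · exp (np / c)`, while `(1 - p)^(n - k) ≤ exp (-pn + pk)`. With `c = 256`,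
`D ≤ log n / 300`, `np ≤ 2 log n` and `pk ≤ 2 log n / √n ≤ log n / 1000`, the total excess
`D log 256 + np / 256 + pk` is below `log n / 30`.
-/

open Real Finset
open scoped Nat

lemma choose_mul_pow_le_pow_div_factorial (n i : ℕ) {p : ℝ} (hp : 0 ≤ p) :
    (n.choose i : ℝ) * p ^ i ≤ (n * p) ^ i / i ! := by
  rw [mul_pow, mul_div_right_comm]
  exact mul_le_mul_of_nonneg_right (Nat.choose_le_pow_div i n) (pow_nonneg hp i)

lemma sum_range_succ_pow_div_factorial_le {x c : ℝ} (hx : 0 ≤ x) (hc : 1 ≤ c) (D : ℕ) :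
    ∑ i ∈ range (D + 1), x ^ i / i ! ≤ c ^ D * exp (x / c) := by
  have hc0 : c ≠ 0 := by positivity
  calc ∑ i ∈ range (D + 1), x ^ i / i !
      = ∑ i ∈ range (D + 1), c ^ i * ((x / c) ^ i / i !) := by
        refine sum_congr rfl fun i _ => ?_
        rw [← mul_div_assoc, ← mul_pow, mul_div_cancel₀ x hc0]
    _ ≤ ∑ i ∈ range (D + 1), c ^ D * ((x / c) ^ i / i !) := by
        gcongr with i hi
        exact Nat.lt_succ_iff.mp (mem_range.mp hi)
    _ = c ^ D * ∑ i ∈ range (D + 1), (x / c) ^ i / i ! := (mul_sum ..).symm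
    _ ≤ c ^ D * exp (x / c) := by gcongr; exact sum_le_exp_of_nonneg (by positivity) _

lemma one_sub_pow_sub_le_exp {p : ℝ} (hp0 : 0 ≤ p) (hp1 : p ≤ 1) (n k : ℕ) :
    (1 - p) ^ (n - k) ≤ exp (-(p * n) + p * k) := by
  have hcast : (n : ℝ) - k ≤ (n - k : ℕ) := by
    rw [sub_le_iff_le_add]
    exact_mod_cast le_tsub_add
  calc (1 - p) ^ (n - k) ≤ exp (-p) ^ (n - k) := by
        gcongr
        exact one_sub_le_exp_neg p
    _ = exp (-(p * (n - k : ℕ))) := by rw [← exp_nat_mul]; ring_nf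
    _ ≤ exp (-(p * n) + p * k) := by gcongr; nlinarith

lemma sum_choose_mul_pow_mul_one_sub_pow_le {p c : ℝ} (hp0 : 0 ≤ p) (hp1 : p ≤ 1) (hc : 1 ≤ c)
    (n k D : ℕ) :
    ∑ i ∈ range (D + 1), (n.choose i : ℝ) * p ^ i * (1 - p) ^ (n - k)
      ≤ exp (-(p * n) + (D * log c + n * p / c + p * k)) := by
  have hsum : ∑ i ∈ range (D + 1), (n.choose i : ℝ) * p ^ i ≤ c ^ D * exp (n * p / c) :=
    (sum_le_sum fun i _ => choose_mul_pow_le_pow_div_factorial n i hp0).trans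
      (sum_range_succ_pow_div_factorial_le (by positivity) hc D)
  rw [← sum_mul]
  calc (∑ i ∈ range (D + 1), (n.choose i : ℝ) * p ^ i) * (1 - p) ^ (n - k)
      ≤ c ^ D * exp (n * p / c) * exp (-(p * n) + p * k) :=
        mul_le_mul hsum (one_sub_pow_sub_le_exp hp0 hp1 n k) (pow_nonneg (by linarith) _)
          (by positivity)
    _ = exp (-(p * n) + (D * log c + n * p / c + p * k)) := by
        rw [← exp_log (by positivity : 0 < c), ← exp_nat_mul, log_exp, ← exp_add, ← exp_add]
        ring_nf

lemma two_mul_log_div_le_one {x : ℝ} (hx : 0 < x) : 2 * log x / x ≤ 1 := by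
  have hlog : log √x ≤ √x - 1 := log_le_sub_one_of_pos (sqrt_pos.mpr hx)
  rw [log_sqrt hx.le] at hlog
  rw [div_le_one hx]
  nlinarith [sq_nonneg (√x - 2), mul_self_sqrt hx.le]

lemma two_mul_log_div_mul_rpow_half_le {x : ℝ} (hx : 4000000 ≤ x) :
    2 * log x / x * x ^ (1 / 2 : ℝ) ≤ log x / 1000 := by
  have hx0 : 0 < x := by linarith
  have hsqrt : 2000 ≤ √x := le_sqrt_of_sq_le (by linarith)
  have hlog : 0 ≤ log x := log_nonneg (by linarith)
  rw [← sqrt_eq_rpow, div_mul_eq_mul_div, div_le_div_iff₀ hx0 (by norm_num)]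
  nlinarith [mul_self_sqrt hx0.le, mul_nonneg (mul_nonneg hlog (sqrt_nonneg x)) (sub_nonneg.mpr hsqrt)]

/-- There exists `n₀` such that for all `n ≥ n₀`, with `d = log n / 300`,
for every `k ≤ n^{1/2}` and every real `p` with `log n/(4n) ≤ p ≤ 2 log n/n`,
`∑_{i=0}^{⌊d⌋} C(n,i) p^i (1-p)^{n-k} ≤ exp(-pn + (log n)/30)`. -/
theorem stmt0 :
    ∃ n₀ : ℕ, ∀ n : ℕ, n₀ ≤ n →
      ∀ k : ℕ, (k : ℝ) ≤ (n : ℝ) ^ (1 / 2 : ℝ) →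
      ∀ p : ℝ, Real.log n / (4 * n) ≤ p → p ≤ 2 * Real.log n / n →
      ∑ i ∈ Finset.range (⌊Real.log n / 300⌋₊ + 1),
          (n.choose i : ℝ) * p ^ i * (1 - p) ^ (n - k)
        ≤ Real.exp (-(p * n) + Real.log n / 30) := by
  refine ⟨4000000, fun n hn k hk p hp_lower hp_upper => ?_⟩
  have hn' : (4000000 : ℝ) ≤ n := by exact_mod_cast hn
  have hn0 : (0 : ℝ) < n := by linarith
  set L := log n
  have hL : 0 ≤ L := log_nonneg (by linarith)
  have hp0 : 0 ≤ p := (by positivity : 0 ≤ L / (4 * n)).trans hp_lower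
  have hp1 : p ≤ 1 := hp_upper.trans (two_mul_log_div_le_one hn0)
  have hnp : n * p ≤ 2 * L := by rwa [le_div_iff₀ hn0, mul_comm] at hp_upper
  have hpk : p * k ≤ L / 1000 :=
    (mul_le_mul hp_upper hk k.cast_nonneg (by positivity)).trans
      (two_mul_log_div_mul_rpow_half_le hn')
  have hlog256 : log 256 ≤ 5.55 := by
    rw [show (256 : ℝ) = 2 ^ 8 by norm_num, log_pow]
    linarith [log_two_lt_d9]
  have hD : (⌊L / 300⌋₊ : ℝ) * log 256 ≤ L / 300 * 5.55 :=
    mul_le_mul (Nat.floor_le (by positivity)) hlog256 (log_nonneg (by norm_num)) (by positivity)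
  refine (sum_choose_mul_pow_mul_one_sub_pow_le hp0 hp1 (c := 256) (by norm_num) n k _).trans
    (exp_le_exp.mpr ?_)
  linarith
end

section
/- Let n ≥ 3 and let G be an n-vertex graph that is a 10-expander. Then for every pair e of distinct vertices of G, the number of e-boosters for G is at least n²/10⁴. -/
open SimpleGraph

/-- The external neighbourhood of a vertex set `A` in a graph `G`. -/
def extNbhd {V : Type*} (G : SimpleGraph V) (A : Set V) : Set V :=
  {v | v ∉ A ∧ ∃ a ∈ A, G.Adj a v}

/-- A graph on `n` vertices is a 10-expander if it is connected and every vertex set `A`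
with `|A| ≤ n/20` satisfies `|N(A)| ≥ 10|A|`. -/
def IsTenExpander {V : Type*} [Fintype V] (G : SimpleGraph V) : Prop :=
  G.Connected ∧ ∀ A : Set V, (A.ncard : ℝ) ≤ (Fintype.card V : ℝ) / 20 →
    10 * A.ncard ≤ (extNbhd G A).ncard

/-- `f` is an `e`-booster for `G`: either `G + e + f` has a longer path containing `e`
than `G + e` does, or `G + e + f` has a Hamilton cycle through `e`. -/
def IsBooster {V : Type*} [DecidableEq V] (G : SimpleGraph V) (e f : Sym2 V) : Prop :=
  (∃ (u v : V) (w : (G ⊔ fromEdgeSet {e, f}).Walk u v), w.IsPath ∧ e ∈ w.edges ∧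
      ∀ (x y : V) (w' : (G ⊔ fromEdgeSet {e}).Walk x y),
        w'.IsPath → e ∈ w'.edges → w'.length < w.length) ∨
  (∃ (u : V) (w : (G ⊔ fromEdgeSet {e, f}).Walk u u), w.IsHamiltonianCycle ∧ e ∈ w.edges)

/-!
Let `H = G + e` and let `P` be a longest path of `H` through `e`. Pósa rotations that keep `e`
(reverse the segment behind a vertex adjacent to the current end) give longest paths with the same
start. If `S` is the set of their ends, every `H`-neighbour of `S` outside `S` is a neighbour of
`S` along `P` or an endpoint of `e`, so `|N_G(S)| ≤ 2|S| + 2` and the expansion of `G` forces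
`|S| > n/20`. Restarting from each `b ∈ S` gives more than `n/20` vertices `a` that end longest
paths from `b` through `e`. Adding `ba` closes such a path into a cycle through `e`: either a
Hamilton cycle, or, by connectivity, a cycle with an edge leaving it, and opening the cycle there
gives a longer path through `e`. Counting the pairs `(b, a)` yields `n²/800` boosters.
-/

variable {V : Type*}

lemma extNbhd_mono {G G' : SimpleGraph V} (h : G ≤ G') (A : Set V) :
    extNbhd G A ⊆ extNbhd G' A :=
  fun _ ⟨hy, a, ha, hadj⟩ => ⟨hy, a, ha, h hadj⟩

namespace SimpleGraph.Walk
variable {G : SimpleGraph V}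

theorem IsCycle.exists_isPath_of_mem_edges {u : V} {c : G.Walk u u} (hc : c.IsCycle)
    {e : Sym2 V} (he : e ∈ c.edges) :
    ∃ (v : V) (p : G.Walk v u), p.IsPath ∧ p.length + 1 = c.length ∧ e ∈ p.edges ∧
      p.support ⊆ c.support := by
  have of_mem_tail : ∀ {c : G.Walk u u}, c.IsCycle → e ∈ c.edges.tail →
      ∃ (v : V) (p : G.Walk v u), p.IsPath ∧ p.length + 1 = c.length ∧ e ∈ p.edges ∧
        p.support ⊆ c.support := by
    rintro (_ | ⟨h, p⟩) hc he
    · simp at he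
    · exact ⟨_, p, ((cons_isCycle_iff p h).1 hc).1, rfl, by simpa using he,
        List.subset_cons_self _ _⟩
  by_cases h : e ∈ c.edges.tail
  · exact of_mem_tail hc h
  -- Otherwise `e` is the first edge of `c`, hence the last edge of `c.reverse`.
  obtain ⟨t, ht⟩ : ∃ t, c.edges = e :: t := by
    rcases hce : c.edges with _ | ⟨g, t⟩
    · simp [hce] at he
    · rw [hce, List.tail_cons] at h
      rw [hce] at he
      exact ⟨t, by rw [(List.mem_cons.1 he).resolve_right h]⟩
  have ht_ne : t ≠ [] := by
    rintro rfl
    have := congrArg List.length ht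
    simp only [length_edges, List.length_singleton] at this
    linarith [hc.three_le_length]
  obtain ⟨v, p, hp, hlen, hep, hsub⟩ := of_mem_tail hc.reverse (by
    rw [edges_reverse, ht, List.reverse_cons,
      List.tail_append_of_ne_nil (List.reverse_ne_nil_iff.2 ht_ne)]
    simp)
  exact ⟨v, p, hp, by simpa using hlen, hep, fun x hx => by simpa using hsub hx⟩

end SimpleGraph.Walk

section Booster
variable [DecidableEq V] {G : SimpleGraph V} {e : Sym2 V}

theorem isBooster_of_isPath (hconn : (G ⊔ fromEdgeSet {e}).Connected) {a b : V}
    {w : (G ⊔ fromEdgeSet {e}).Walk a b} (hw : w.IsPath) (he : e ∈ w.edges)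
    (hlen : 2 ≤ w.length)
    (hmax : ∀ (x y : V) (w' : (G ⊔ fromEdgeSet {e}).Walk x y), w'.IsPath → e ∈ w'.edges →
      w'.length ≤ w.length) :
    IsBooster G e s(a, b) := by
  have hle : G ⊔ fromEdgeSet {e} ≤ G ⊔ fromEdgeSet {e, s(a, b)} :=
    sup_le_sup_left (fromEdgeSet_mono (by simp)) G
  have hab : a ≠ b := by
    rintro rfl
    have := Walk.length_eq_zero_iff.2 (Walk.isPath_iff_nil.1 hw)
    omega
  have hba : (G ⊔ fromEdgeSet {e, s(a, b)}).Adj b a :=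
    Or.inr ⟨by simp [Sym2.eq_swap], hab.symm⟩
  set c := Walk.cons hba (w.mapLe hle)
  have hc : c.IsCycle := by
    refine (Walk.cons_isCycle_iff _ _).2 ⟨(Walk.isPath_mapLe hle).2 hw, fun h => ?_⟩
    rw [Walk.edges_mapLe_eq_edges, Sym2.eq_swap] at h
    have := hw.length_eq_one_of_mem_edges h
    omega
  have hec : e ∈ c.edges := by simp [c, he]
  by_cases hall : ∀ v, v ∈ w.support
  · refine Or.inr ⟨b, c, Walk.isHamiltonianCycle_iff_isCycle_and_support_count_tail_eq_one.2
      ⟨hc, fun v => ?_⟩, hec⟩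
    simpa [c] using List.count_eq_one_of_mem hw.support_nodup (hall v)
  push Not at hall
  obtain ⟨x, hx⟩ := hall
  obtain ⟨d, -, hdy, hdx⟩ := (hconn.preconnected a x).some.exists_boundary_dart
    {v | v ∈ w.support} w.start_mem_support hx
  simp only [Set.mem_ofPred_eq] at hdy hdx
  have hyc : d.fst ∈ c.support := by simp [c, hdy]
  -- Rotating the cycle to `d.fst` and dropping an edge there other than `e` leaves a path
  -- through `e` ending at `d.fst`, which the edge `d` extends to the vertex `d.snd` off the cycle.
  obtain ⟨v, p, hp, hplen, hep, hsub⟩ :=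
    ((Walk.isCycle_rotate hyc).2 hc).exists_isPath_of_mem_edges
      (((c.rotate_edges _ hyc).mem_iff).2 hec)
  refine Or.inl ⟨v, d.snd, p.concat (hle d.adj), hp.concat (fun h => hdx ?_) _, by simp [hep],
    fun x y w' hw' he' => ?_⟩
  · have : d.snd = b ∨ d.snd ∈ w.support := by
      simpa [c] using (Walk.mem_support_rotate_iff c _ hyc).1 (hsub h)
    exact this.resolve_left fun hb => hdx (hb ▸ w.end_mem_support)
  · have := hmax x y w' hw' he'
    simp only [Walk.length_concat, Walk.length_rotate, c, Walk.length_cons,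
      Walk.length_mapLe] at hplen ⊢
    omega

end Booster

def pathEdges (l : List V) : List (Sym2 V) := List.zipWith (s(·, ·)) l l.tail

@[simp] lemma pathEdges_nil : pathEdges ([] : List V) = [] := rfl

@[simp] lemma pathEdges_singleton (a : V) : pathEdges [a] = [] := rfl

@[simp] lemma pathEdges_cons_cons (a b : V) (l : List V) :
    pathEdges (a :: b :: l) = s(a, b) :: pathEdges (b :: l) := rfl

lemma pathEdges_cons (a : V) {l : List V} (h : l ≠ []) :
    pathEdges (a :: l) = s(a, l.head h) :: pathEdges l := by
  obtain ⟨b, l, rfl⟩ := List.exists_cons_of_ne_nil h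
  rfl

lemma SimpleGraph.Walk.edges_eq_pathEdges {G : SimpleGraph V} {u v : V} (w : G.Walk u v) :
    w.edges = pathEdges w.support :=
  Walk.edges_eq_zipWith_support

lemma mem_pathEdges_iff {g : Sym2 V} {l : List V} :
    g ∈ pathEdges l ↔ ∃ (i : ℕ) (h : i + 1 < l.length), g = s(l[i], l[i + 1]) := by
  simp only [pathEdges, List.mem_iff_getElem, List.length_zipWith, List.length_tail,
    List.getElem_zipWith, List.getElem_tail]
  constructor
  · rintro ⟨i, hi, rfl⟩
    exact ⟨i, by omega, rfl⟩
  · rintro ⟨i, hi, rfl⟩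
    exact ⟨i, by omega, rfl⟩

lemma pathEdges_append_cons (l₁ : List V) (v : V) (l₂ : List V) :
    pathEdges (l₁ ++ v :: l₂) = pathEdges (l₁ ++ [v]) ++ pathEdges (v :: l₂) := by
  induction l₁ with
  | nil => simp
  | cons a l₁ ih =>
    cases l₁ with
    | nil => simp
    | cons b l₁ => simpa using ih

lemma pathEdges_concat {l : List V} (h : l ≠ []) (v : V) :
    pathEdges (l ++ [v]) = pathEdges l ++ [s(l.getLast h, v)] := by
  induction l with
  | nil => exact absurd rfl h
  | cons a l ih =>
    cases l with
    | nil => simp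
    | cons b l =>
      have := ih (List.cons_ne_nil _ _)
      simp only [List.cons_append, pathEdges_cons_cons] at this ⊢
      simp [this]

lemma pathEdges_reverse (l : List V) : pathEdges l.reverse = (pathEdges l).reverse := by
  induction l with
  | nil => rfl
  | cons a l ih =>
    cases l with
    | nil => rfl
    | cons b l =>
      rw [List.reverse_cons, pathEdges_concat (by simp), ih]
      simp [Sym2.eq_swap]

lemma mem_pathEdges_append_cons {l₁ l₂ : List V} {v : V} (h : l₂ ≠ []) {g : Sym2 V} :
    g ∈ pathEdges (l₁ ++ v :: l₂) ↔
      g ∈ pathEdges (l₁ ++ [v]) ∨ g = s(v, l₂.head h) ∨ g ∈ pathEdges l₂ := by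
  rw [pathEdges_append_cons, List.mem_append, pathEdges_cons _ h, List.mem_cons]

lemma mem_pathEdges_append_cons_reverse {l₁ l₂ : List V} {v : V} (h : l₂ ≠ [])
    {g : Sym2 V} :
    g ∈ pathEdges (l₁ ++ v :: l₂.reverse) ↔
      g ∈ pathEdges (l₁ ++ [v]) ∨ g = s(v, l₂.getLast h) ∨ g ∈ pathEdges l₂ := by
  rw [mem_pathEdges_append_cons (List.reverse_ne_nil_iff.2 h), List.head_reverse,
    pathEdges_reverse, List.mem_reverse]

lemma getLast?_append_cons_of_ne_nil (l₁ : List V) (v : V) {l₂ : List V} (h : l₂ ≠ []) :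
    (l₁ ++ v :: l₂).getLast? = some (l₂.getLast h) := by
  rw [List.getLast?_append_of_ne_nil _ (List.cons_ne_nil _ _),
    List.getLast?_eq_some_getLast (List.cons_ne_nil _ _), List.getLast_cons h]

section PathNbrs
variable [Fintype V] [DecidableEq V]

def pathNbrs (l : List V) (y : V) : Finset V := {z | s(y, z) ∈ pathEdges l}

lemma mem_pathNbrs {l : List V} {y z : V} : z ∈ pathNbrs l y ↔ s(y, z) ∈ pathEdges l := by
  simp [pathNbrs]

lemma card_pathNbrs_le {l : List V} (hl : l.Nodup) (y : V) : (pathNbrs l y).card ≤ 2 := by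
  refine (Finset.card_le_card
    (t := {l.getD (l.idxOf y + 1) y, l.getD (l.idxOf y - 1) y}) ?_).trans
    Finset.card_le_two
  intro z hz
  obtain ⟨j, hj, hyz⟩ := mem_pathEdges_iff.1 (mem_pathNbrs.1 hz)
  simp only [Finset.mem_insert, Finset.mem_singleton]
  rcases Sym2.eq_iff.1 hyz with ⟨rfl, rfl⟩ | ⟨rfl, rfl⟩
  · left
    rw [hl.idxOf_getElem, List.getD_eq_getElem]
  · right
    rw [hl.idxOf_getElem, Nat.add_sub_cancel, List.getD_eq_getElem]

lemma pathNbrs_append_cons_reverse {l₁ l₂ : List V} {v y : V} (h : l₂ ≠ []) (hyv : y ≠ v)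
    (hyu : y ≠ l₂.head h) (hyb : y ≠ l₂.getLast h) :
    pathNbrs (l₁ ++ v :: l₂.reverse) y = pathNbrs (l₁ ++ v :: l₂) y := by
  ext z
  have hne : ∀ w, y ≠ w → s(y, z) ≠ s(v, w) := fun w hw hc => by
    rcases Sym2.eq_iff.1 hc with ⟨h₁, -⟩ | ⟨h₁, -⟩
    exacts [hyv h₁, hw h₁]
  simp only [mem_pathNbrs, mem_pathEdges_append_cons h, mem_pathEdges_append_cons_reverse h,
    hne _ hyu, hne _ hyb, false_or]

end PathNbrs

section PathThrough
variable {H : SimpleGraph V} {e : Sym2 V} {l : List V}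

def IsPathThrough (H : SimpleGraph V) (e : Sym2 V) (l : List V) : Prop :=
  l.IsChain H.Adj ∧ l.Nodup ∧ e ∈ pathEdges l

def IsLongestPathThrough (H : SimpleGraph V) (e : Sym2 V) (l : List V) : Prop :=
  IsPathThrough H e l ∧ ∀ l', IsPathThrough H e l' → l'.length ≤ l.length

lemma isPathThrough_support {u v : V} (w : H.Walk u v) :
    IsPathThrough H e w.support ↔ w.IsPath ∧ e ∈ w.edges := by
  simp [IsPathThrough, w.isChain_adj_support, Walk.isPath_def, Walk.edges_eq_pathEdges]

lemma IsPathThrough.two_le_length (h : IsPathThrough H e l) : 2 ≤ l.length := by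
  obtain ⟨i, hi, -⟩ := mem_pathEdges_iff.1 h.2.2
  omega

lemma IsPathThrough.ne_nil (h : IsPathThrough H e l) : l ≠ [] :=
  List.ne_nil_of_length_pos (by have := h.two_le_length; omega)

lemma IsPathThrough.exists_walk (h : IsPathThrough H e l) {a b : V} (ha : l.head? = some a)
    (hb : l.getLast? = some b) :
    ∃ w : H.Walk a b, w.IsPath ∧ e ∈ w.edges ∧ w.length + 1 = l.length := by
  have hne : l ≠ [] := by rintro rfl; simp at ha
  obtain rfl : l.head hne = a := by rwa [List.head?_eq_some_head hne, Option.some_inj] at ha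
  obtain rfl : l.getLast hne = b := by
    rwa [List.getLast?_eq_some_getLast hne, Option.some_inj] at hb
  have hw := (isPathThrough_support (Walk.ofSupport l hne h.1)).1 (by rwa [Walk.support_ofSupport])
  refine ⟨_, hw.1, hw.2, ?_⟩
  have := h.two_le_length
  rw [Walk.length_ofSupport]
  omega

lemma IsPathThrough.head_ne_getLast (h : IsPathThrough H e l) {a b : V} (ha : l.head? = some a)
    (hb : l.getLast? = some b) : a ≠ b := by
  rintro rfl
  obtain ⟨w, hw, he, -⟩ := h.exists_walk ha hb
  simp [Walk.isPath_iff_nil.1 hw |>.eq_nil] at he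

lemma IsPathThrough.reverse (h : IsPathThrough H e l) : IsPathThrough H e l.reverse :=
  ⟨List.isChain_reverse.2 (h.1.imp fun _ _ hab => hab.symm), List.nodup_reverse.2 h.2.1,
    by rw [pathEdges_reverse, List.mem_reverse]; exact h.2.2⟩

lemma IsPathThrough.concat (h : IsPathThrough H e l) {b y : V} (hb : l.getLast? = some b)
    (hadj : H.Adj b y) (hy : y ∉ l) : IsPathThrough H e (l ++ [y]) := by
  refine ⟨List.isChain_append.2 ⟨h.1, List.isChain_singleton y, ?_⟩, ?_, ?_⟩
  · simpa [hb] using hadj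
  · exact List.nodup_append.2 ⟨h.2.1, List.nodup_singleton y, by
      simpa using fun x hx (hxy : x = y) => hy (hxy ▸ hx)⟩
  · have hne : l ≠ [] := by rintro rfl; simp at hb
    rw [pathEdges_concat hne]
    exact List.mem_append_left _ h.2.2

lemma exists_isPathThrough_sup_fromEdgeSet {G : SimpleGraph V} (he : ¬ e.IsDiag) :
    ∃ l, IsPathThrough (G ⊔ fromEdgeSet {e}) e l := by
  induction e using Sym2.ind with
  | _ u v =>
    have huv : u ≠ v := by simpa using he
    exact ⟨[u, v], List.isChain_pair.2 (Or.inr ⟨rfl, huv⟩), by simp [huv], by simp⟩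

lemma exists_isLongestPathThrough [Fintype V] (h : ∃ l, IsPathThrough H e l) :
    ∃ P, IsLongestPathThrough H e P := by
  obtain ⟨P, hP, hmax⟩ := Set.exists_max_image {l | IsPathThrough H e l} List.length
    ((List.finite_length_le V (Fintype.card V)).subset fun _ hl => hl.2.1.length_le_card) h
  exact ⟨P, hP, hmax⟩

namespace IsLongestPathThrough

lemma reverse (h : IsLongestPathThrough H e l) : IsLongestPathThrough H e l.reverse :=
  ⟨h.1.reverse, fun l' hl' => (h.2 l' hl').trans_eq l.length_reverse.symm⟩

lemma mem_of_adj_getLast (h : IsLongestPathThrough H e l) {b y : V} (hb : l.getLast? = some b)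
    (hadj : H.Adj b y) : y ∈ l := by
  by_contra hy
  have := h.2 _ (h.1.concat hb hadj hy)
  simp at this

lemma length_le_of_walk (h : IsLongestPathThrough H e l) {x y : V} {w : H.Walk x y}
    (hw : w.IsPath) (he : e ∈ w.edges) : w.length + 1 ≤ l.length := by
  simpa using h.2 _ ((isPathThrough_support w).2 ⟨hw, he⟩)

lemma three_le_length [Fintype V] (hconn : H.Connected) (hcard : 3 ≤ Fintype.card V)
    (h : IsLongestPathThrough H e l) : 3 ≤ l.length := by
  by_contra! hl
  obtain ⟨a, b, rfl⟩ : ∃ a b, l = [a, b] :=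
    List.length_eq_two.1 (by have := h.1.two_le_length; omega)
  obtain ⟨z, hz⟩ : ∃ z, z ∉ [a, b] := by
    classical
    by_contra! hall
    have := (Finset.card_le_card (s := .univ) fun v _ => List.mem_toFinset.2 (hall v)).trans
      (List.toFinset_card_le [a, b])
    simp only [Finset.card_univ, List.length_cons, List.length_nil] at this
    omega
  obtain ⟨d, -, hdy, hdz⟩ := (hconn.preconnected a z).some.exists_boundary_dart
    {v | v ∈ [a, b]} (by simp) hz
  simp only [Set.mem_ofPred_eq] at hdy hdz
  rcases List.mem_pair.1 hdy with hya | hyb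
  · exact hdz (List.mem_reverse.1 (h.reverse.mem_of_adj_getLast (by simp [hya]) d.adj))
  · exact hdz (h.mem_of_adj_getLast (by simp [hyb]) d.adj)

theorem isBooster [Fintype V] [DecidableEq V] {G : SimpleGraph V}
    (hconn : (G ⊔ fromEdgeSet {e}).Connected) (hcard : 3 ≤ Fintype.card V)
    (h : IsLongestPathThrough (G ⊔ fromEdgeSet {e}) e l) {a b : V} (ha : l.head? = some a)
    (hb : l.getLast? = some b) : IsBooster G e s(a, b) := by
  obtain ⟨w, hw, he, hlen⟩ := h.1.exists_walk ha hb
  have := h.three_le_length hconn hcard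
  exact isBooster_of_isPath hconn hw he (by omega) fun x y w' hw' he' => by
    have := h.length_le_of_walk hw' he'
    omega

end IsLongestPathThrough

end PathThrough

section Rotation
variable {H : SimpleGraph V} {e : Sym2 V} {P Q Q' : List V}

def PosaRotation (H : SimpleGraph V) (e : Sym2 V) (Q Q' : List V) : Prop :=
  ∃ (l₁ l₂ : List V) (v : V) (h : l₂ ≠ []),
    Q = l₁ ++ v :: l₂ ∧ Q' = l₁ ++ v :: l₂.reverse ∧ H.Adj (l₂.getLast h) v ∧
      e ∈ pathEdges Q'

namespace PosaRotation

lemma perm (h : PosaRotation H e Q Q') : Q'.Perm Q := by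
  obtain ⟨l₁, l₂, v, -, rfl, rfl, -, -⟩ := h
  exact (l₂.reverse_perm.cons v).append_left l₁

lemma head?_eq (h : PosaRotation H e Q Q') : Q'.head? = Q.head? := by
  obtain ⟨l₁, l₂, v, -, rfl, rfl, -, -⟩ := h
  cases l₁ <;> rfl

lemma isPathThrough (h : PosaRotation H e Q Q') (hQ : IsPathThrough H e Q) :
    IsPathThrough H e Q' := by
  have hnd := h.perm.nodup_iff.2 hQ.2.1
  obtain ⟨l₁, l₂, v, hl₂, rfl, rfl, hadj, he⟩ := h
  refine ⟨?_, hnd, he⟩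
  obtain ⟨h₁, h₂, -⟩ := List.isChain_append.1 (List.append_cons l₁ v l₂ ▸ hQ.1)
  rw [List.append_cons]
  refine List.isChain_append.2 ⟨h₁, List.isChain_reverse.2 (h₂.imp fun _ _ h => h.symm), ?_⟩
  simpa [List.head?_reverse, List.getLast?_eq_some_getLast hl₂] using hadj.symm

lemma isLongestPathThrough (h : PosaRotation H e Q Q') (hQ : IsLongestPathThrough H e Q) :
    IsLongestPathThrough H e Q' :=
  ⟨h.isPathThrough hQ.1, fun l hl => (hQ.2 l hl).trans_eq h.perm.length_eq.symm⟩

end PosaRotation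

lemma IsLongestPathThrough.of_reflTransGen (hP : IsLongestPathThrough H e P)
    (h : Relation.ReflTransGen (PosaRotation H e) P Q) : IsLongestPathThrough H e Q := by
  induction h with
  | refl => exact hP
  | tail _ hstep ih => exact hstep.isLongestPathThrough ih

lemma head?_eq_of_reflTransGen (h : Relation.ReflTransGen (PosaRotation H e) P Q) :
    Q.head? = P.head? := by
  induction h with
  | refl => rfl
  | tail _ hstep ih => exact hstep.head?_eq.trans ih

end Rotation

section RotationEnds
variable [Fintype V] {H : SimpleGraph V} {e : Sym2 V} {P : List V}

open Classical in
noncomputable def rotationEnds (H : SimpleGraph V) (e : Sym2 V) (P : List V) : Finset V :=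
  {b | ∃ Q, Relation.ReflTransGen (PosaRotation H e) P Q ∧ Q.getLast? = some b}

lemma mem_rotationEnds {b : V} :
    b ∈ rotationEnds H e P ↔
      ∃ Q, Relation.ReflTransGen (PosaRotation H e) P Q ∧ Q.getLast? = some b := by
  simp [rotationEnds]

lemma getLast_mem_rotationEnds (hP : P ≠ []) : P.getLast hP ∈ rotationEnds H e P :=
  mem_rotationEnds.2 ⟨P, .refl, List.getLast?_eq_some_getLast hP⟩

lemma mem_rotationEnds_of_posaRotation {Q : List V} {l₁ l₂ : List V} {v : V} (h : l₂ ≠ [])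
    (hPQ : Relation.ReflTransGen (PosaRotation H e) P Q)
    (hQ : PosaRotation H e Q (l₁ ++ v :: l₂.reverse)) :
    l₂.head h ∈ rotationEnds H e P :=
  mem_rotationEnds.2 ⟨_, hPQ.tail hQ, by
    rw [getLast?_append_cons_of_ne_nil _ _ (List.reverse_ne_nil_iff.2 h), List.getLast_reverse]⟩

lemma IsLongestPathThrough.exists_head?_eq (hP : IsLongestPathThrough H e P) {b : V}
    (hb : b ∈ rotationEnds H e P) :
    ∃ P', IsLongestPathThrough H e P' ∧ P'.head? = some b := by
  obtain ⟨Q, hPQ, hQb⟩ := mem_rotationEnds.1 hb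
  exact ⟨Q.reverse, (hP.of_reflTransGen hPQ).reverse, by rwa [List.head?_reverse]⟩

variable [DecidableEq V]

noncomputable def rotationEndNbrs (H : SimpleGraph V) (e : Sym2 V) (P : List V) : Finset V :=
  (rotationEnds H e P).biUnion (pathNbrs P)

lemma card_rotationEndNbrs_le (hP : P.Nodup) :
    (rotationEndNbrs H e P).card ≤ 2 * (rotationEnds H e P).card :=
  Finset.card_biUnion_le.trans <| by
    simpa [mul_comm] using Finset.sum_le_card_nsmul _ _ 2 fun b _ => card_pathNbrs_le hP b

-- A rotation at `v` only changes the path edges at `v` and at the old and new ends; the ends lie in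
-- `rotationEnds H e P`, and `v` is a path neighbour of the new end.
lemma pathNbrs_eq_of_reflTransGen {Q : List V}
    (hPQ : Relation.ReflTransGen (PosaRotation H e) P Q) {y : V}
    (hyS : y ∉ rotationEnds H e P) (hyN : y ∉ rotationEndNbrs H e P) :
    pathNbrs Q y = pathNbrs P y := by
  induction hPQ with
  | refl => rfl
  | @tail Q Q' hPQ hstep ih =>
    obtain ⟨l₁, l₂, v, h₂, rfl, rfl, hadj, he⟩ := id hstep
    have hu := mem_rotationEnds_of_posaRotation h₂ hPQ hstep
    have hb : l₂.getLast h₂ ∈ rotationEnds H e P :=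
      mem_rotationEnds.2 ⟨_, hPQ, getLast?_append_cons_of_ne_nil _ _ h₂⟩
    have hyv : y ≠ v := by
      rintro rfl
      refine hyN (Finset.mem_biUnion.2 ⟨_, hu, ?_⟩)
      have : l₂.head h₂ ∈ pathNbrs (l₁ ++ y :: l₂) y :=
        mem_pathNbrs.2 ((mem_pathEdges_append_cons h₂).2 (Or.inr (Or.inl rfl)))
      rw [ih, mem_pathNbrs] at this
      rwa [mem_pathNbrs, Sym2.eq_swap]
    rw [pathNbrs_append_cons_reverse h₂ hyv (fun h => hyS (h ▸ hu)) (fun h => hyS (h ▸ hb)),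
      ih]

-- Pósa's lemma. A neighbour `y` of an end `b` of a rotation `Q` lies on `Q`, as `Q` is longest.
-- Unless `y ∈ e`, rotating `Q` at `y` is allowed and makes the successor `u` of `y` on `Q` an end;
-- if `y` were not a path neighbour of an end, `u` would be a neighbour of `y` along `P` as well.
lemma extNbhd_rotationEnds_subset (hP : IsLongestPathThrough H e P) :
    extNbhd H ↑(rotationEnds H e P) ⊆ ↑(rotationEndNbrs H e P ∪ e.toFinset) := by
  rintro y ⟨hyS, b, hb, hadj⟩
  simp only [Finset.mem_coe] at hyS hb
  rw [Finset.mem_coe, Finset.mem_union, Sym2.mem_toFinset]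
  by_contra! hy
  obtain ⟨Q, hPQ, hQb⟩ := mem_rotationEnds.1 hb
  have hQ := hP.of_reflTransGen hPQ
  obtain ⟨q₁, q₂, rfl⟩ := List.append_of_mem (hQ.mem_of_adj_getLast hQb hadj)
  have h₂ : q₂ ≠ [] := by
    rintro rfl
    rw [List.getLast?_concat, Option.some_inj] at hQb
    exact hyS (hQb ▸ hb)
  have he : e ∈ pathEdges (q₁ ++ y :: q₂.reverse) := by
    rcases (mem_pathEdges_append_cons h₂).1 hQ.1.2.2 with h | rfl | h
    · exact (mem_pathEdges_append_cons_reverse h₂).2 (Or.inl h)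
    · exact absurd (Sym2.mem_mk_left _ _) hy.2
    · exact (mem_pathEdges_append_cons_reverse h₂).2 (Or.inr (Or.inr h))
  have hbq : q₂.getLast h₂ = b := by
    rwa [getLast?_append_cons_of_ne_nil _ _ h₂, Option.some_inj] at hQb
  have hu := mem_rotationEnds_of_posaRotation h₂ hPQ
    ⟨q₁, q₂, y, h₂, rfl, rfl, hbq ▸ hadj, he⟩
  refine hy.1 (Finset.mem_biUnion.2 ⟨_, hu, ?_⟩)
  have : q₂.head h₂ ∈ pathNbrs P y := by
    rw [← pathNbrs_eq_of_reflTransGen hPQ hyS hy.1, mem_pathNbrs]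
    exact (mem_pathEdges_append_cons h₂).2 (Or.inr (Or.inl rfl))
  rwa [mem_pathNbrs, Sym2.eq_swap, ← mem_pathNbrs]

theorem IsLongestPathThrough.lt_twenty_mul_card_rotationEnds {G : SimpleGraph V}
    (hG : IsTenExpander G) (hP : IsLongestPathThrough (G ⊔ fromEdgeSet {e}) e P) :
    Fintype.card V < 20 * (rotationEnds (G ⊔ fromEdgeSet {e}) e P).card := by
  set S := rotationEnds (G ⊔ fromEdgeSet {e}) e P
  have hS : 0 < S.card := Finset.card_pos.2 ⟨_, getLast_mem_rotationEnds hP.1.ne_nil⟩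
  by_contra! hsmall
  have hexp := hG.2 S (by
    rw [Set.ncard_coe_finset, le_div_iff₀ (by norm_num)]
    exact_mod_cast (mul_comm S.card 20).trans_le hsmall)
  rw [Set.ncard_coe_finset] at hexp
  have hN : (extNbhd G S).ncard ≤ 2 * S.card + 2 := calc
    (extNbhd G S).ncard ≤ (extNbhd (G ⊔ fromEdgeSet {e}) S).ncard :=
      Set.ncard_le_ncard (extNbhd_mono le_sup_left _)
    _ ≤ (rotationEndNbrs _ e P ∪ e.toFinset).card := by
      rw [← Set.ncard_coe_finset]
      exact Set.ncard_le_ncard (extNbhd_rotationEnds_subset hP)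
    _ ≤ 2 * S.card + 2 := (Finset.card_union_le _ _).trans <|
      add_le_add (card_rotationEndNbrs_le hP.1.2.1) (e.card_toFinset ▸ by split_ifs <;> simp)
  omega

theorem IsLongestPathThrough.isBooster_of_mem_rotationEnds {G : SimpleGraph V}
    (hconn : (G ⊔ fromEdgeSet {e}).Connected) (hcard : 3 ≤ Fintype.card V)
    (hP : IsLongestPathThrough (G ⊔ fromEdgeSet {e}) e P) {a b : V} (hb : P.head? = some b)
    (ha : a ∈ rotationEnds (G ⊔ fromEdgeSet {e}) e P) :
    ¬ s(b, a).IsDiag ∧ IsBooster G e s(b, a) := by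
  obtain ⟨Q, hPQ, hQa⟩ := mem_rotationEnds.1 ha
  have hQ := hP.of_reflTransGen hPQ
  have hQb : Q.head? = some b := (head?_eq_of_reflTransGen hPQ).trans hb
  exact ⟨Sym2.mk_isDiag_iff.not.2 (hQ.1.head_ne_getLast hQb hQa),
    hQ.isBooster hconn hcard hQb hQa⟩

theorem IsLongestPathThrough.exists_many_boosters {G : SimpleGraph V}
    (hG : IsTenExpander G) (hcard : 3 ≤ Fintype.card V)
    (hP : IsLongestPathThrough (G ⊔ fromEdgeSet {e}) e P) {b : V}
    (hb : b ∈ rotationEnds (G ⊔ fromEdgeSet {e}) e P) :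
    ∃ T : Finset V, Fintype.card V < 20 * T.card ∧
      ∀ a ∈ T, ¬ s(b, a).IsDiag ∧ IsBooster G e s(b, a) := by
  obtain ⟨P', hP', hP'b⟩ := hP.exists_head?_eq hb
  exact ⟨_, hP'.lt_twenty_mul_card_rotationEnds hG, fun a ha =>
    hP'.isBooster_of_mem_rotationEnds (hG.1.mono le_sup_left) hcard hP'b ha⟩

end RotationEnds

theorem card_mul_le_two_mul_card_of_le_card_partners {α : Type*} [Fintype α] [DecidableEq α]
    (B : Finset (Sym2 α)) (S : Finset α) (t : ℕ)
    (h : ∀ b ∈ S, t ≤ (Finset.univ.filter fun a => s(b, a) ∈ B).card) :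
    S.card * t ≤ 2 * B.card := by
  rw [mul_comm 2]
  refine Finset.card_mul_le_card_mul (fun b g => b ∈ g) (fun b hb => (h b hb).trans ?_)
    fun g _ => ?_
  · refine Finset.card_le_card_of_injOn (fun a => s(b, a)) (fun a ha => ?_)
      fun a _ a' _ => Sym2.congr_right.1
    simp only [Finset.coe_filter, Finset.mem_univ, true_and, Set.mem_ofPred_eq] at ha
    simp [Finset.bipartiteAbove, ha]
  · refine (Finset.card_le_card fun b hb => ?_).trans
      (g.card_toFinset.trans_le (by split_ifs <;> simp))
    simp only [Finset.bipartiteBelow, Finset.mem_filter] at hb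
    exact Sym2.mem_toFinset.2 hb.2

/-- If `n ≥ 3` and `G` is an `n`-vertex 10-expander, then for every pair
`e` of distinct vertices, `G` has at least `n²/10⁴` `e`-boosters. -/
theorem stmt1 (n : ℕ) (hn : 3 ≤ n) (G : SimpleGraph (Fin n)) (hG : IsTenExpander G)
    (e : Sym2 (Fin n)) (he : ¬ e.IsDiag) :
    (n : ℝ) ^ 2 / 10 ^ 4 ≤
      ({f : Sym2 (Fin n) | ¬ f.IsDiag ∧ IsBooster G e f}).ncard := by
  classical
  set B : Finset (Sym2 (Fin n)) := {f | ¬ f.IsDiag ∧ IsBooster G e f}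
  have hcard : 3 ≤ Fintype.card (Fin n) := by simpa using hn
  obtain ⟨P, hP⟩ :=
    exists_isLongestPathThrough (exists_isPathThrough_sup_fromEdgeSet (G := G) he)
  have hS := hP.lt_twenty_mul_card_rotationEnds hG
  have hpartners : ∀ b ∈ rotationEnds (G ⊔ fromEdgeSet {e}) e P,
      n / 20 + 1 ≤ (Finset.univ.filter fun a => s(b, a) ∈ B).card := fun b hb => by
    obtain ⟨T, hT, hTB⟩ := hP.exists_many_boosters hG hcard hb
    have := Finset.card_le_card (t := Finset.univ.filter fun a => s(b, a) ∈ B)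
      fun a ha => by simpa [B] using hTB a ha
    rw [Fintype.card_fin] at hT
    omega
  have hcount := card_mul_le_two_mul_card_of_le_card_partners B _ _ hpartners
  rw [Fintype.card_fin] at hS
  have : n ^ 2 ≤ 10 ^ 4 * B.card := by nlinarith [(by omega : n < 20 * (n / 20 + 1))]
  rw [show {f | ¬ f.IsDiag ∧ IsBooster G e f} = (B : Set (Sym2 (Fin n))) by ext; simp [B],
    Set.ncard_coe_finset, div_le_iff₀ (by norm_num)]
  exact_mod_cast this.trans_eq (mul_comm _ _)
end

section
/- Let H be a graph on vertex set of size h, and let m ≤ h/25. Suppose (i) every vertex set U ⊆ V(H) with 0 < |U| ≤ m satisfies |N_H(U)| ≥ 10|U|, and (ii) any two disjoint vertex sets of H of size at least m have an edge between them. Then H is connected, and moreover every set U ⊆ V(H) with |U| ≤ h/20 satisfies |N_H(U)| ≥ 10|U|; that is, H is a 10-expander. -/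
open SimpleGraph

/-- If `H` is a graph on `h` vertices, `m ≤ h/25`, every nonempty set `U`
with `|U| ≤ m` satisfies `|N(U)| ≥ 10|U|`, and any two disjoint vertex sets of size at
least `m` have an edge between them, then `H` is a 10-expander. -/
theorem stmt3 (h : ℕ) (H : SimpleGraph (Fin h)) (m : ℝ) (hm : m ≤ (h : ℝ) / 25)
    (h1 : ∀ U : Set (Fin h), U.Nonempty → (U.ncard : ℝ) ≤ m →
      10 * U.ncard ≤ (extNbhd H U).ncard)
    (h2 : ∀ A B : Set (Fin h), Disjoint A B → m ≤ A.ncard → m ≤ B.ncard →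
      ∃ a ∈ A, ∃ b ∈ B, H.Adj a b) :
    IsTenExpander H := by
  classical
  by_cases hm0 : m ≤ 0
  · exfalso
    obtain ⟨a, ha, -⟩ := h2 ∅ ∅ (disjoint_bot_left) (by simpa) (by simpa)
    exact ha
  push_neg at hm0
  have hh : (0:ℝ) < (h:ℝ) := by linarith [hm]
  have hcard : (Fintype.card (Fin h) : ℝ) = (h : ℝ) := by simp
  -- Main expansion property
  have key : ∀ A : Set (Fin h), (A.ncard : ℝ) ≤ (h:ℝ)/20 →
      10 * A.ncard ≤ (extNbhd H A).ncard := by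
    intro A hA
    rcases A.eq_empty_or_nonempty with rfl | hne
    · simp
    by_cases hAm : (A.ncard : ℝ) ≤ m
    · exact h1 A hne hAm
    push_neg at hAm
    set B := (A ∪ extNbhd H A)ᶜ with hBdef
    have hBA : Disjoint A B := by
      rw [Set.disjoint_left]
      intro x hx hxB
      exact hxB (Or.inl hx)
    have hBm : (B.ncard : ℝ) < m := by
      by_contra hc
      push_neg at hc
      obtain ⟨a, ha, b, hb, hab⟩ := h2 A B hBA hAm.le hc
      have hbA : b ∉ A := fun hbA => hb (Or.inl hbA)
      exact hb (Or.inr ⟨hbA, a, ha, hab⟩)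
    have hsplit : A.ncard + (extNbhd H A).ncard + B.ncard = h := by
      have hdisj : Disjoint A (extNbhd H A) := by
        rw [Set.disjoint_left]
        intro x hx hxN
        exact hxN.1 hx
      have h1' : (A ∪ extNbhd H A).ncard = A.ncard + (extNbhd H A).ncard :=
        Set.ncard_union_eq hdisj (Set.toFinite _) (Set.toFinite _)
      have h2' : (A ∪ extNbhd H A).ncard + B.ncard = h := by
        rw [hBdef]
        rw [Set.ncard_add_ncard_compl (A ∪ extNbhd H A) (Set.toFinite _) (Set.toFinite _)]
        simp
      rw [← h1', h2']
    have hsplitR : (A.ncard : ℝ) + (extNbhd H A).ncard + B.ncard = (h : ℝ) := by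
      exact_mod_cast congrArg (Nat.cast : ℕ → ℝ) hsplit
    have h10 : (10 : ℝ) * A.ncard ≤ ((extNbhd H A).ncard : ℝ) := by
      linarith
    exact_mod_cast h10
  have hpos : 0 < h := by exact_mod_cast hh
  constructor
  · rw [connected_iff]
    refine ⟨?_, Fin.pos_iff_nonempty.mp hpos⟩
    intro u v
    by_contra hr
    set C : Set (Fin h) := {w | H.Reachable u w} with hC
    set D : Set (Fin h) := {w | H.Reachable v w} with hD
    have hdisj : Disjoint C D := by
      rw [Set.disjoint_left]
      intro w hw hw'
      exact hr ((hw : H.Reachable u w).trans (hw' : H.Reachable v w).symm)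
    have hCN : extNbhd H C = ∅ := by
      ext w
      simp only [Set.mem_empty_iff_false, iff_false]
      rintro ⟨hw, a, ha, hadj⟩
      exact hw ((ha : H.Reachable u a).trans hadj.reachable)
    have hDN : extNbhd H D = ∅ := by
      ext w
      simp only [Set.mem_empty_iff_false, iff_false]
      rintro ⟨hw, a, ha, hadj⟩
      exact hw ((ha : H.Reachable v a).trans hadj.reachable)
    have hbig : ∀ (S : Set (Fin h)), S.Nonempty → extNbhd H S = ∅ →
        m ≤ (S.ncard : ℝ) := by
      intro S hSne hSN
      by_contra hc
      push_neg at hc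
      have hle : (S.ncard : ℝ) ≤ (h:ℝ)/20 := by linarith
      have := key S hle
      rw [hSN] at this
      simp only [Set.ncard_empty] at this
      have hpos' : 0 < S.ncard := hSne.ncard_pos (Set.toFinite S)
      omega
    have hmc : m ≤ (C.ncard : ℝ) := hbig C ⟨u, Reachable.refl u⟩ hCN
    have hmd : m ≤ (D.ncard : ℝ) := hbig D ⟨v, Reachable.refl v⟩ hDN
    obtain ⟨a, ha, b, hb, hab⟩ := h2 C D hdisj hmc hmd
    have hbC : b ∉ C := fun hbC => (Set.disjoint_left.mp hdisj hbC) hb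
    have : b ∈ extNbhd H C := ⟨hbC, a, ha, hab⟩
    rw [hCN] at this
    exact this
  · intro A hA
    rw [hcard] at hA
    exact key A hA
end

section
/- Let p ∈ [0,1], n ∈ ℕ, let 𝓗 be a set of oriented graphs with vertex set [n], and let D₀ be a fixed digraph with vertex set [n]. Let D₁ be the binomial random digraph D(n,p) in which each ordered pair (u,v), u ≠ v, is an edge independently with probability p, and let D₁* be the random digraph in which, for each unordered pair {u,v}, both edges (u,v) and (v,u) are included together independently with probability p (and otherwise both excluded). Then P(∃ H ∈ 𝓗 : H ⊆ D₀ ∪ D₁) ≥ P(∃ H ∈ 𝓗 : H ⊆ D₀ ∪ D₁*). -/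
open MeasureTheory
open scoped ENNReal

/-- The Bernoulli measure on `Bool` with success probability `p` (clamped to `[0,1]`). -/
noncomputable def bernoulliMeasure (p : ℝ≥0∞) : Measure Bool :=
  (PMF.bernoulli (min p 1).toNNReal
    ((ENNReal.toNNReal_mono ENNReal.one_ne_top (min_le_right p 1)).trans (by simp))).toMeasure

instance (p : ℝ≥0∞) : IsProbabilityMeasure (bernoulliMeasure p) :=
  PMF.toMeasure.isProbabilityMeasure _

/-- Independent fair-coin-style product measure: each coordinate is `true`
independently with probability `p`. -/
noncomputable def coinMeasure (ι : Type*) [Fintype ι] (p : ℝ≥0∞) : Measure (ι → Bool) :=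
  Measure.pi fun _ => bernoulliMeasure p

/-- The edge set of the binomial random digraph `D(n,p)` determined by the outcome `ω`:
each ordered pair `(u,v)` with `u ≠ v` is an edge iff its coin is `true`. -/
def dEdges {n : ℕ} (ω : Fin n × Fin n → Bool) : Set (Fin n × Fin n) :=
  {e | e.1 ≠ e.2 ∧ ω e = true}

/-- The edge set of the random digraph `D*(n,p)` determined by the outcome `ω`: for each
unordered pair `{u,v}` both edges `(u,v)` and `(v,u)` are included together iff the coin of
the ordered representative is `true`. -/
def dStarEdges {n : ℕ} (ω : Fin n × Fin n → Bool) : Set (Fin n × Fin n) :=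
  {e | e.1 ≠ e.2 ∧ ω (if e.1 ≤ e.2 then e else (e.2, e.1)) = true}

/-- A digraph (given by its edge set) is an oriented graph: no loops and at most one edge
between any pair of vertices. -/
def IsOriented {n : ℕ} (H : Set (Fin n × Fin n)) : Prop :=
  ∀ u v : Fin n, (u, v) ∈ H → u ≠ v ∧ (v, u) ∉ H

/-!
McDiarmid's coupling. Start from `D*`, where each unordered pair `{u, v}` carries one coin that
decides both `(u, v)` and `(v, u)`, and decouple the pairs one at a time by giving the reversed
edge its own coin. The event `∃ H ∈ 𝓗, H ⊆ D₀ ∪ D` is increasing, and since an oriented `H`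
uses at most one of `(u, v)`, `(v, u)`, with the other coins fixed its indicator `f(a, b)` in the
two edge states satisfies `f(1,1) + f(0,0) ≤ f(1,0) + f(0,1)`. With `s = p`, `t = 1 - p` this gives
`s f(1,1) + t f(0,0) ≤ s² f(1,1) + s t (f(1,0) + f(0,1)) + t² f(0,0)`, so no decoupling step
lowers the probability of the event.
-/

open MeasureTheory Function

theorem measure_true_add_measure_false (ν : Measure Bool) [IsProbabilityMeasure ν] :
    ν {true} + ν {false} = 1 := by
  have hunion : ({true} ∪ {false} : Set Bool) = Set.univ := by
    ext b; cases b <;> simp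
  rw [← measure_union (by simp) (measurableSet_singleton _), hunion, measure_univ]

theorem lintegral_bool (ν : Measure Bool) (g : Bool → ℝ≥0∞) :
    ∫⁻ b, g b ∂ν = g true * ν {true} + g false * ν {false} := by
  rw [lintegral_fintype, Fintype.sum_bool]

theorem lmarginal_pair {δ : Type*} [DecidableEq δ] {X : δ → Type*} [∀ i, MeasurableSpace (X i)]
    (μ : ∀ i, Measure (X i)) [∀ i, SigmaFinite (μ i)] {f : (∀ i, X i) → ℝ≥0∞}
    (hf : Measurable f) {i j : δ} (hij : i ≠ j) (x : ∀ i, X i) :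
    (∫⋯∫⁻_{i, j}, f ∂μ) x = ∫⁻ a, ∫⁻ b, f (update (update x i a) j b) ∂μ j ∂μ i := by
  rw [lmarginal_insert f hf (by simpa using hij)]
  simp only [lmarginal_singleton]

theorem indicator_add_indicator_le {α : Type*} [Preorder α] {A : Set α} (hA : IsUpperSet A)
    {a b c d : α} (hdb : d ≤ b) (hdc : d ≤ c) (ha : a ∈ A → b ∈ A ∨ c ∈ A) :
    A.indicator (1 : α → ℝ≥0∞) a + A.indicator 1 d ≤ A.indicator 1 b + A.indicator 1 c := by
  by_cases hd : d ∈ A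
  · simp only [Set.indicator_of_mem hd, Set.indicator_of_mem (hA hdb hd),
      Set.indicator_of_mem (hA hdc hd), Pi.one_apply]
    gcongr
    exact Set.indicator_le_self' (fun _ _ => zero_le_one) a
  · rw [Set.indicator_of_notMem hd, add_zero]
    by_cases haA : a ∈ A
    · rw [Set.indicator_of_mem haA]
      rcases ha haA with hb | hc
      · simp [Set.indicator_of_mem hb]
      · simp [Set.indicator_of_mem hc]
    · simp [Set.indicator_of_notMem haA]

theorem mul_add_mul_le_of_add_le {s t a b c d : ℝ≥0∞} (hst : s + t = 1) (h : a + d ≤ b + c) :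
    a * s + d * t ≤ (a * s + b * t) * s + (c * s + d * t) * t :=
  calc a * s + d * t = (a * s + d * t) * (s + t) := by rw [hst, mul_one]
    _ = a * s * s + d * t * t + (a + d) * s * t := by ring
    _ ≤ a * s * s + d * t * t + (b + c) * s * t := by gcongr
    _ = (a * s + b * t) * s + (c * s + d * t) * t := by ring

/-- Replacing coordinate `i` by a copy of coordinate `j` turns two independent coins into one
shared coin; this can only lower the probability of an increasing event that never needs both
coins to be `true`. -/
theorem measure_pi_preimage_copy_le {ι : Type*} [Fintype ι] [DecidableEq ι]
    (ν : Measure Bool) [IsProbabilityMeasure ν] {A : Set (ι → Bool)} (hA : IsUpperSet A)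
    {i j : ι} (hij : i ≠ j)
    (hsplit : ∀ x ∈ A, x i = true → x j = true → update x i false ∈ A ∨ update x j false ∈ A) :
    Measure.pi (fun _ => ν) {x | update x i (x j) ∈ A} ≤ Measure.pi (fun _ => ν) A := by
  rw [← lintegral_indicator_one (.of_discrete), ← lintegral_indicator_one (.of_discrete)]
  refine lintegral_le_of_lmarginal_le {i, j} .of_discrete .of_discrete fun x => ?_
  rw [lmarginal_pair _ .of_discrete hij, lmarginal_pair _ .of_discrete hij]
  simp only [lintegral_bool]
  obtain ⟨y, hy⟩ : ∃ y : Bool → Bool → ι → Bool, ∀ a b, update (update x i a) j b = y a b :=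
    ⟨_, fun _ _ => rfl⟩
  simp only [hy]
  have hcopy : ∀ a b, {x | update x i (x j) ∈ A}.indicator (1 : (ι → Bool) → ℝ≥0∞) (y a b)
      = A.indicator 1 (y b b) := by
    intro a b
    have : update (y a b) i (y a b j) = y b b := by
      simp only [← hy, update_self]
      rw [update_comm hij, update_idem, update_comm hij.symm]
    rw [← this]
    exact Set.indicator_comp_right (g := 1) _
  have hmono : ∀ a b, y false false ≤ y a b := by
    intro a b k
    simp only [← hy, update_apply]
    split_ifs <;> simp
  have hy_split : y true true ∈ A → y true false ∈ A ∨ y false true ∈ A := by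
    intro h
    have hi : update (y true true) i false = y false true := by
      simp only [← hy]; rw [update_comm hij, update_idem, update_comm hij.symm]
    have hj : update (y true true) j false = y true false := by
      simp only [← hy, update_idem]
    rw [← hi, ← hj, or_comm]
    exact hsplit _ h (by simp [← hy, hij]) (by simp [← hy])
  have hcoupled : ∀ c : ℝ≥0∞, c * ν {true} + c * ν {false} = c := by
    intro c
    rw [← mul_add, measure_true_add_measure_false, mul_one]
  simp only [hcopy, hcoupled]
  exact mul_add_mul_le_of_add_le (measure_true_add_measure_false ν)
    (indicator_add_indicator_le hA (hmono true false) (hmono false true) hy_split)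

section HybridDigraph

variable {V : Type*} [LinearOrder V]

def canonicalPair (e : V × V) : V × V :=
  if e.1 ≤ e.2 then e else (e.2, e.1)

theorem canonicalPair_fst_le (e : V × V) : (canonicalPair e).1 ≤ (canonicalPair e).2 := by
  unfold canonicalPair
  split_ifs with h
  · exact h
  · exact (not_le.1 h).le

/-- The coin read by the edge `e` of the hybrid digraph: edges in `T` read their own coin, all
other edges read the coin of their increasing orientation. Thus `T = ∅` gives `D*(n,p)` and
`T = univ` gives `D(n,p)`. -/
def coinIndex (T : Finset (V × V)) (e : V × V) : V × V :=
  if e ∈ T then e else canonicalPair e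

def hybridEdges (T : Finset (V × V)) (ω : V × V → Bool) : Set (V × V) :=
  {e | e.1 ≠ e.2 ∧ ω (coinIndex T e) = true}

theorem hybridEdges_mono (T : Finset (V × V)) : Monotone (hybridEdges T) :=
  fun _ _ hωω' _ he => ⟨he.1, Bool.le_iff_imp.1 (hωω' _) he.2⟩

theorem coinIndex_insert_of_le {T : Finset (V × V)} {t : V × V} (ht : t.1 ≤ t.2) :
    coinIndex (insert t T) = coinIndex T := by
  ext1 e
  by_cases he : e = t
  · subst he
    simp [coinIndex, canonicalPair, ht]
  · simp [coinIndex, he]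

theorem coinIndex_ne_of_lt {T : Finset (V × V)} {t : V × V} (ht : t.2 < t.1) (htT : t ∉ T)
    (e : V × V) : coinIndex T e ≠ t := by
  unfold coinIndex
  split_ifs with he
  · exact ne_of_mem_of_not_mem he htT
  · rintro rfl
    exact (canonicalPair_fst_le e).not_gt ht

theorem eq_of_coinIndex_eq_of_lt {T : Finset (V × V)} {c e : V × V} (hc : c.2 < c.1)
    (h : coinIndex T e = c) : e = c := by
  unfold coinIndex at h
  split_ifs at h
  · exact h
  · subst h
    exact absurd hc (canonicalPair_fst_le e).not_gt

theorem eq_of_coinIndex_eq_of_swap_mem {T : Finset (V × V)} {c e : V × V} (hc : (c.2, c.1) ∈ T)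
    (h : coinIndex T e = c) : e = c := by
  unfold coinIndex canonicalPair at h
  split_ifs at h with he
  · exact h
  · exact h
  · subst h
    exact absurd hc he

theorem hybridEdges_insert {T : Finset (V × V)} {t : V × V} (ht : t.2 < t.1) (htT : t ∉ T)
    (ω : V × V → Bool) :
    hybridEdges T ω = hybridEdges (insert t T) (update ω t (ω (t.2, t.1))) := by
  ext e
  refine and_congr_right fun _ => ?_
  by_cases he : e = t
  · subst he
    simp [coinIndex, canonicalPair, htT, not_le.2 ht]
  · rw [show coinIndex (insert t T) e = coinIndex T e by simp [coinIndex, he],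
      update_of_ne (coinIndex_ne_of_lt ht htT e)]

theorem subset_union_hybridEdges_update {D₀ H : Set (V × V)} {T : Finset (V × V)}
    {ω : V × V → Bool} {c : V × V} (hc : ∀ e, coinIndex T e = c → e = c) (hcH : c ∉ H)
    (hH : H ⊆ D₀ ∪ hybridEdges T ω) (b : Bool) : H ⊆ D₀ ∪ hybridEdges T (update ω c b) := by
  intro e heH
  refine (hH heH).imp_right fun he => ⟨he.1, ?_⟩
  rw [update_of_ne fun h => hcH (hc e h ▸ heH)]
  exact he.2

def containsEvent (𝓗 : Set (Set (V × V))) (D₀ : Set (V × V)) (T : Finset (V × V)) :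
    Set (V × V → Bool) :=
  {ω | ∃ H ∈ 𝓗, H ⊆ D₀ ∪ hybridEdges T ω}

theorem isUpperSet_containsEvent (𝓗 : Set (Set (V × V))) (D₀ : Set (V × V))
    (T : Finset (V × V)) : IsUpperSet (containsEvent 𝓗 D₀ T) :=
  fun _ _ hωω' ⟨H, hH, hsub⟩ =>
    ⟨H, hH, hsub.trans (Set.union_subset_union_right _ (hybridEdges_mono T hωω'))⟩

variable [Fintype V] (ν : Measure Bool) [IsProbabilityMeasure ν]

theorem measure_containsEvent_le_insert {𝓗 : Set (Set (V × V))}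
    (h𝓗 : ∀ H ∈ 𝓗, ∀ u v, (u, v) ∈ H → (v, u) ∉ H) (D₀ : Set (V × V)) {T : Finset (V × V)}
    {t : V × V} (htT : t ∉ T) :
    Measure.pi (fun _ => ν) (containsEvent 𝓗 D₀ T)
      ≤ Measure.pi (fun _ => ν) (containsEvent 𝓗 D₀ (insert t T)) := by
  rcases le_or_gt t.1 t.2 with ht | ht
  · simp only [containsEvent, hybridEdges, coinIndex_insert_of_le ht, le_rfl]
  have hpreimage : containsEvent 𝓗 D₀ T
      = {ω | update ω t (ω (t.2, t.1)) ∈ containsEvent 𝓗 D₀ (insert t T)} := by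
    ext ω
    simp only [containsEvent, Set.mem_ofPred, hybridEdges_insert ht htT ω]
  rw [hpreimage]
  refine measure_pi_preimage_copy_le ν (isUpperSet_containsEvent 𝓗 D₀ _)
    (fun h => ht.ne (congrArg Prod.fst h).symm) fun ω ⟨H, hH, hsub⟩ _ _ => ?_
  by_cases htH : t ∈ H
  · refine .inr ⟨H, hH, subset_union_hybridEdges_update ?_ (h𝓗 H hH t.1 t.2 htH) hsub false⟩
    exact fun e => eq_of_coinIndex_eq_of_swap_mem (Finset.mem_insert_self t T)
  · exact .inl ⟨H, hH, subset_union_hybridEdges_update (fun e => eq_of_coinIndex_eq_of_lt ht)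
      htH hsub false⟩

theorem measure_containsEvent_empty_le {𝓗 : Set (Set (V × V))}
    (h𝓗 : ∀ H ∈ 𝓗, ∀ u v, (u, v) ∈ H → (v, u) ∉ H) (D₀ : Set (V × V)) (T : Finset (V × V)) :
    Measure.pi (fun _ => ν) (containsEvent 𝓗 D₀ ∅)
      ≤ Measure.pi (fun _ => ν) (containsEvent 𝓗 D₀ T) := by
  induction T using Finset.induction_on with
  | empty => exact le_rfl
  | insert t T htT ih => exact ih.trans (measure_containsEvent_le_insert ν h𝓗 D₀ htT)

end HybridDigraph

theorem dStarEdges_eq_hybridEdges_empty {n : ℕ} (ω : Fin n × Fin n → Bool) :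
    dStarEdges ω = hybridEdges ∅ ω := by
  simp [dStarEdges, hybridEdges, coinIndex, canonicalPair]

theorem dEdges_eq_hybridEdges_univ {n : ℕ} (ω : Fin n × Fin n → Bool) :
    dEdges ω = hybridEdges Finset.univ ω := by
  simp [dEdges, hybridEdges, coinIndex]

theorem stmt4_general (n : ℕ) (p : ℝ)
    (𝓗 : Set (Set (Fin n × Fin n))) (h𝓗 : ∀ H ∈ 𝓗, IsOriented H)
    (D₀ : Set (Fin n × Fin n)) :
    coinMeasure (Fin n × Fin n) (ENNReal.ofReal p)
        {ω | ∃ H ∈ 𝓗, H ⊆ D₀ ∪ dStarEdges ω}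
      ≤ coinMeasure (Fin n × Fin n) (ENNReal.ofReal p)
        {ω | ∃ H ∈ 𝓗, H ⊆ D₀ ∪ dEdges ω} := by
  simp only [dStarEdges_eq_hybridEdges_empty, dEdges_eq_hybridEdges_univ]
  exact measure_containsEvent_empty_le _ (fun H hH u v huv => (h𝓗 H hH u v huv).2) D₀ Finset.univ

/-- McDiarmid coupling. For any set `𝓗` of oriented graphs on `[n]` and
any fixed digraph `D₀` on `[n]`,
`P(∃ H ∈ 𝓗 : H ⊆ D₀ ∪ D(n,p)) ≥ P(∃ H ∈ 𝓗 : H ⊆ D₀ ∪ D*(n,p))`. -/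
theorem stmt4 (n : ℕ) (p : ℝ) (hp0 : 0 ≤ p) (hp1 : p ≤ 1)
    (𝓗 : Set (Set (Fin n × Fin n))) (h𝓗 : ∀ H ∈ 𝓗, IsOriented H)
    (D₀ : Set (Fin n × Fin n)) :
    coinMeasure (Fin n × Fin n) (ENNReal.ofReal p)
        {ω | ∃ H ∈ 𝓗, H ⊆ D₀ ∪ dStarEdges ω}
      ≤ coinMeasure (Fin n × Fin n) (ENNReal.ofReal p)
        {ω | ∃ H ∈ 𝓗, H ⊆ D₀ ∪ dEdges ω} :=
  stmt4_general n p 𝓗 h𝓗 D₀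
end

section
/- Let Q = u₀u₁⋯u_ℓ be a path in a graph G, let e be an edge of Q, and let 0 ≤ i ≤ ℓ−1 with u_i u_{i+1} ≠ e and u_ℓ u_i ∈ E(G). Then the graph (Q − u_i u_{i+1}) + u_ℓ u_i is a path from u₀ to u_{i+1} that contains the edge e and has the same vertex set as Q. -/
/-!
Split `Q` at the edge `u_i u_{i+1}` as `Q = T · u_i u_{i+1} · D`. The rotated walk is
`T · u_i u_ℓ · D⁻¹`: its vertex list is a permutation of that of `Q`, so it is again a path on
the same vertices, and since `Q` is a trail its edge list is that of `Q` with the single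
occurrence of `u_i u_{i+1}` exchanged for `u_ℓ u_i`.
-/

open SimpleGraph

namespace SimpleGraph.Walk
variable {V : Type*} {G : SimpleGraph V} {u v : V}

lemma cons_drop_succ_eq_drop (p : G.Walk u v) {i : ℕ} (hi : i < p.length) :
    cons (p.adj_getVert_succ hi) (p.drop (i + 1)) = p.drop i := by
  apply ext_support
  rw [support_cons, drop_support_eq_support_drop_min, drop_support_eq_support_drop_min,
    min_eq_left hi.le, min_eq_left hi, getVert_eq_support_getElem _ hi.le,
    List.getElem_cons_drop]

lemma take_append_cons_drop_succ (p : G.Walk u v) {i : ℕ} (hi : i < p.length) :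
    (p.take i).append (cons (p.adj_getVert_succ hi) (p.drop (i + 1))) = p := by
  rw [cons_drop_succ_eq_drop _ hi, append_take_drop_eq]

/-- For `p = u₀ ⋯ u_ℓ` this is `u₀ ⋯ u_i u_ℓ u_{ℓ-1} ⋯ u_{i+1}`. -/
def posaRotation (p : G.Walk u v) (i : ℕ) (h : G.Adj v (p.getVert i)) :
    G.Walk u (p.getVert (i + 1)) :=
  (p.take i).append (cons h.symm (p.drop (i + 1)).reverse)

lemma support_posaRotation_perm (p : G.Walk u v) {i : ℕ} (hi : i < p.length)
    (h : G.Adj v (p.getVert i)) : (p.posaRotation i h).support.Perm p.support := by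
  conv_rhs => rw [← p.take_append_cons_drop_succ hi]
  simp only [posaRotation, support_append, support_cons, support_reverse, List.tail_cons]
  exact (List.reverse_perm _).append_left _

lemma IsPath.posaRotation {p : G.Walk u v} (hp : p.IsPath) {i : ℕ} (hi : i < p.length)
    (h : G.Adj v (p.getVert i)) : (p.posaRotation i h).IsPath := by
  rw [isPath_def, (p.support_posaRotation_perm hi h).nodup_iff]
  exact hp.support_nodup

lemma IsTrail.edges_posaRotation_perm [DecidableEq V] {p : G.Walk u v} (hp : p.IsTrail)
    {i : ℕ} (hi : i < p.length) (h : G.Adj v (p.getVert i)) :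
    (p.posaRotation i h).edges.Perm
      (s(v, p.getVert i) :: p.edges.erase s(p.getVert i, p.getVert (i + 1))) := by
  have hedges : p.edges = (p.take i).edges ++
      s(p.getVert i, p.getVert (i + 1)) :: (p.drop (i + 1)).edges := by
    conv_lhs => rw [← p.take_append_cons_drop_succ hi]
    rw [edges_append, edges_cons]
  have hnotin := (List.nodup_cons.mp (List.nodup_middle.mp (hedges ▸ hp.edges_nodup))).1
  rw [hedges, List.erase_append_right _ (fun hmem => hnotin (List.mem_append_left _ hmem)),
    List.erase_cons_head]
  simp only [posaRotation, edges_append, edges_cons, edges_reverse]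
  rw [Sym2.eq_swap]
  exact List.perm_middle.trans (List.Perm.cons _ ((List.reverse_perm _).append_left _))

end SimpleGraph.Walk

/-- Pósa rotation. Let `Q = u₀u₁⋯u_ℓ` be a path in `G`, `e ∈ E(Q)`,
`0 ≤ i ≤ ℓ−1` with `u_i u_{i+1} ≠ e` and `u_ℓ u_i ∈ E(G)`. Then
`(Q − u_i u_{i+1}) + u_ℓ u_i` is a path from `u₀` to `u_{i+1}` containing `e`, with the
same vertex set as `Q`. -/
theorem stmt6 {V : Type*} [DecidableEq V] (G : SimpleGraph V) {u₀ uℓ : V}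
    (w : G.Walk u₀ uℓ) (hw : w.IsPath) (e : Sym2 V) (he : e ∈ w.edges)
    (i : ℕ) (hi : i + 1 ≤ w.length)
    (hne : s(w.getVert i, w.getVert (i + 1)) ≠ e)
    (hadj : G.Adj uℓ (w.getVert i)) :
    ∃ w' : G.Walk u₀ (w.getVert (i + 1)), w'.IsPath ∧ e ∈ w'.edges ∧
      {v | v ∈ w'.support} = {v | v ∈ w.support} ∧
      {e' | e' ∈ w'.edges} =
        insert s(uℓ, w.getVert i)
          ({e' | e' ∈ w.edges} \ {s(w.getVert i, w.getVert (i + 1))}) := by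
  have hedges := hw.isTrail.edges_posaRotation_perm hi hadj
  have mem_edges (e' : Sym2 V) : e' ∈ (w.posaRotation i hadj).edges ↔
      e' = s(uℓ, w.getVert i) ∨ e' ∈ w.edges ∧ e' ≠ s(w.getVert i, w.getVert (i + 1)) := by
    rw [hedges.mem_iff, List.mem_cons, hw.isTrail.edges_nodup.mem_erase_iff, and_comm]
  refine ⟨w.posaRotation i hadj, hw.posaRotation hi hadj, ?_, ?_, ?_⟩
  · exact (mem_edges e).2 (Or.inr ⟨he, hne.symm⟩)
  · ext v
    exact (w.support_posaRotation_perm hi hadj).mem_iff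
  · ext e'
    exact mem_edges e'
end

section
/- There exists n₀ such that the following holds for all n ≥ n₀ and all λ ∈ ℕ. Suppose C is an oriented cycle on n vertices having exactly λ vertices of out-degree 0. Let μ₀, μ₂ ∈ ℕ with μ₀ + μ₂ = ⌈2λ/log n⌉ and let μ₁ = ⌈(n − 2λ)/log n⌉. Then there exists a path P ⊆ C of length at most n/100 and vertex sets Z₀, Z₁, Z₂ ⊆ V(P) such that: (i) the vertices in Z₀ ∪ Z₁ ∪ Z₂ are pairwise at distance at least 100 log n/loglog n from each other along P, and (ii) for each i ∈ {0,1,2}, |Z_i| = μ_i and every vertex of Z_i has out-degree i in C. -/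
/-- The out-degree of the vertex `i` in the oriented `n`-cycle with vertex set `ZMod n`
whose edge `{j, j+1}` is directed `j → j+1` iff `σ j = true`. -/
def cycleOutDeg {n : ℕ} (σ : ZMod n → Bool) (i : ZMod n) : ℕ :=
  (if σ i then 1 else 0) + (if σ (i - 1) then 0 else 1)

/-!
Sinks (out-degree 0) and sources (out-degree 2) alternate around the cycle, so there are `λ` of
each and `n - 2λ` vertices of out-degree 1, and on any stretch of the cycle the numbers of sinks
and sources differ by at most one. Slide a window of length about `n / 150` around the cycle: its
number of sinks changes by at most one per step, and by averaging some window has many sinks and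
some window has many vertices of out-degree 1, so some window has a number of sinks between the
two thresholds. Of its two halves, separated by a gap of length `d ≈ 100 log n / log log n`, the
one with more sinks has room for `Z₀` and `Z₂`, the other for `Z₁`, and the points are then
chosen greedily `d` apart. When `λ` or `n - 2λ` is below `log n`, at most one vertex of the
scarce kind is needed, and the path starts at it.
-/

open Finset Real

def Apart (d x y : ℕ) : Prop := x + d ≤ y ∨ y + d ≤ x

instance (d : ℕ) : Std.Symm (Apart d) := ⟨fun _ _ => Or.symm⟩

lemma Apart.le_abs_sub {d x y : ℕ} (h : Apart d x y) : (d : ℝ) ≤ |(x : ℝ) - y| := by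
  rw [le_abs]
  rcases h with h | h
  · right
    have := (Nat.cast_le (α := ℝ)).2 h
    push_cast at this
    linarith
  · left
    have := (Nat.cast_le (α := ℝ)).2 h
    push_cast at this
    linarith

/-- Greedy choice: each chosen point rules out at most `2 * d + 1` candidates. -/
theorem exists_apart_subset (d : ℕ) (S : Finset ℕ) (k : ℕ) :
    ∀ F : Finset ℕ, (F : Set ℕ).Pairwise (Apart d) →
      (k ≠ 0 → (2 * d + 1) * (#F + k) ≤ #S + 2 * d) →
      ∃ T ⊆ S, #T = k ∧ Disjoint T F ∧ (↑(T ∪ F) : Set ℕ).Pairwise (Apart d) := by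
  induction k with
  | zero => exact fun F hF _ => ⟨∅, empty_subset _, rfl, disjoint_empty_left _, by simpa⟩
  | succ k ih =>
    intro F hF hS
    set bad := F.biUnion fun f => Icc (f - d) (f + d)
    have hbad : #bad < #S := by
      have := hS k.succ_ne_zero
      calc #bad ≤ ∑ f ∈ F, #(Icc (f - d) (f + d)) := card_biUnion_le
        _ ≤ ∑ _f ∈ F, (2 * d + 1) := sum_le_sum fun f _ => by simp only [Nat.card_Icc]; omega
        _ < #S := by rw [sum_const, smul_eq_mul]; nlinarith
    obtain ⟨x, hxS, hxbad⟩ := exists_mem_notMem_of_card_lt_card hbad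
    have hxF : ∀ f ∈ F, Apart d x f := fun f hf => by
      have : x ∉ Icc (f - d) (f + d) := fun h => hxbad (mem_biUnion.2 ⟨f, hf, h⟩)
      rw [mem_Icc] at this
      unfold Apart
      omega
    have hxnF : x ∉ F := fun hx => hxbad (mem_biUnion.2 ⟨x, hx, by simp⟩)
    obtain ⟨T, hTS, hTk, hTF, hTsep⟩ := ih (insert x F)
      (by
        rw [coe_insert, Set.pairwise_insert_of_symm]
        exact ⟨hF, fun f hf _ => hxF f hf⟩)
      (fun _ => by rw [card_insert_of_notMem hxnF]; linarith [hS k.succ_ne_zero])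
    have hxT : x ∉ T := fun hx => disjoint_left.1 hTF hx (mem_insert_self x F)
    refine ⟨insert x T, insert_subset hxS hTS, by rw [card_insert_of_notMem hxT, hTk], ?_, ?_⟩
    · exact disjoint_insert_left.2 ⟨hxnF, hTF.mono_right (subset_insert x F)⟩
    · rwa [insert_union, ← union_insert]

theorem card_filter_eq_zero_add_one_add_two {α : Type*} (s : Finset α) (f : α → ℕ)
    (hf : ∀ x ∈ s, f x ≤ 2) :
    #{x ∈ s | f x = 0} + #{x ∈ s | f x = 1} + #{x ∈ s | f x = 2} = #s := by
  classical
  rw [card_eq_sum_card_fiberwise (t := range 3) fun x hx =>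
    mem_range.2 (Nat.lt_succ_of_le (hf x hx))]
  simp [sum_range_succ]

section Counts

variable {n : ℕ} (σ : ZMod n → Bool)

lemma cycleOutDeg_le_two (i : ZMod n) : cycleOutDeg σ i ≤ 2 := by
  unfold cycleOutDeg; split_ifs <;> simp

lemma ite_cycleOutDeg_zero_sub_ite_two (i : ZMod n) :
    ((if cycleOutDeg σ i = 0 then 1 else 0 : ℤ) - if cycleOutDeg σ i = 2 then 1 else 0) =
      (if σ (i - 1) then 1 else 0) - if σ i then 1 else 0 := by
  unfold cycleOutDeg; cases σ i <;> cases σ (i - 1) <;> simp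

def degPositions (a : ZMod n) (t : ℕ) (s : Finset ℕ) : Finset ℕ :=
  {j ∈ s | cycleOutDeg σ (a + j) = t}

def degCard [NeZero n] (t : ℕ) : ℕ := #{i : ZMod n | cycleOutDeg σ i = t}

lemma degCard_zero_eq_two [NeZero n] : degCard σ 0 = degCard σ 2 := by
  have hshift : ∑ i : ZMod n, ((if σ (i - 1) then 1 else 0 : ℤ) - if σ i then 1 else 0) = 0 := by
    rw [sum_sub_distrib, sub_eq_zero]
    exact Fintype.sum_equiv (Equiv.subRight 1) _ _ fun _ => rfl
  simp_rw [← ite_cycleOutDeg_zero_sub_ite_two, sum_sub_distrib, ← natCast_card_filter] at hshift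
  exact_mod_cast sub_eq_zero.1 hshift

lemma degCard_add [NeZero n] : degCard σ 0 + degCard σ 1 + degCard σ 2 = n := by
  simpa [degCard] using
    card_filter_eq_zero_add_one_add_two univ (cycleOutDeg σ) fun i _ => cycleOutDeg_le_two σ i

lemma card_degPositions_union (a : ZMod n) (t : ℕ) {s s' : Finset ℕ} (h : Disjoint s s') :
    #(degPositions σ a t (s ∪ s')) = #(degPositions σ a t s) + #(degPositions σ a t s') := by
  rw [degPositions, filter_union, card_union_of_disjoint (disjoint_filter_filter h)]; rfl

lemma card_degPositions_add (a : ZMod n) (s : Finset ℕ) :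
    #(degPositions σ a 0 s) + #(degPositions σ a 1 s) + #(degPositions σ a 2 s) = #s :=
  card_filter_eq_zero_add_one_add_two s _ fun _ _ => cycleOutDeg_le_two σ _

/-- Telescoping: along a stretch of the cycle, sinks and sources alternate. -/
lemma card_degPositions_zero_sub_two (a : ZMod n) {u v : ℕ} (huv : u ≤ v) :
    (#(degPositions σ a 0 (Ico u v)) - #(degPositions σ a 2 (Ico u v)) : ℤ) =
      (if σ (a + u - 1) then 1 else 0) - if σ (a + v - 1) then 1 else 0 := by
  set g : ℕ → ℤ := fun j => if σ (a + j - 1) then 1 else 0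
  rw [degPositions, degPositions, natCast_card_filter, natCast_card_filter, ← sum_sub_distrib]
  simp_rw [ite_cycleOutDeg_zero_sub_ite_two]
  rw [← neg_sub, ← sum_Ico_sub (f := g) huv, ← sum_neg_distrib]
  refine sum_congr rfl fun j _ => ?_
  simp [g, ← add_assoc]

lemma card_degPositions_zero_le_and_two_le (a : ZMod n) (u v : ℕ) :
    #(degPositions σ a 0 (Ico u v)) ≤ #(degPositions σ a 2 (Ico u v)) + 1 ∧
      #(degPositions σ a 2 (Ico u v)) ≤ #(degPositions σ a 0 (Ico u v)) + 1 := by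
  rcases le_total u v with huv | hvu
  · have := card_degPositions_zero_sub_two σ a huv
    constructor <;> split_ifs at this <;> omega
  · simp [degPositions, Ico_eq_empty_of_le hvu]

lemma sub_le_card_degPositions (a : ZMod n) (u v : ℕ) :
    v - u ≤ 2 * #(degPositions σ a 0 (Ico u v)) + #(degPositions σ a 1 (Ico u v)) + 1 := by
  have := card_degPositions_add σ a (Ico u v)
  have := (card_degPositions_zero_le_and_two_le σ a u v).2
  rw [Nat.card_Ico] at *
  omega

lemma card_degPositions_le_sub (a : ZMod n) (u v : ℕ) :
    2 * #(degPositions σ a 0 (Ico u v)) + #(degPositions σ a 1 (Ico u v)) ≤ v - u + 1 := by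
  have := card_degPositions_add σ a (Ico u v)
  have := (card_degPositions_zero_le_and_two_le σ a u v).1
  rw [Nat.card_Ico] at *
  omega

lemma card_degPositions_singleton_zero (a : ZMod n) (t : ℕ) :
    #(degPositions σ a t {0}) = if cycleOutDeg σ a = t then 1 else 0 := by
  simp only [degPositions, filter_singleton, Nat.cast_zero, add_zero]
  split_ifs <;> rfl

lemma card_degPositions_le_degCard [NeZero n] (a : ZMod n) (t : ℕ) {s : Finset ℕ}
    (hs : s ⊆ range n) : #(degPositions σ a t s) ≤ degCard σ t := by
  refine card_le_card_of_injOn (fun j => a + j) (fun j hj => ?_) fun x hx y hy hxy => ?_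
  · simpa [degCard] using (mem_filter.1 hj).2
  · have hxy : (x : ZMod n) = y := add_left_cancel hxy
    have hx := mem_range.1 (hs (mem_filter.1 hx).1)
    have hy := mem_range.1 (hs (mem_filter.1 hy).1)
    simpa [ZMod.val_natCast, Nat.mod_eq_of_lt hx, Nat.mod_eq_of_lt hy] using congrArg ZMod.val hxy

lemma sum_card_degPositions [NeZero n] (t : ℕ) (s : Finset ℕ) :
    ∑ a : ZMod n, #(degPositions σ a t s) = #s * degCard σ t := by
  simp only [degPositions, card_filter]
  rw [sum_comm, ← smul_eq_mul, ← sum_const]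
  refine sum_congr rfl fun j _ => ?_
  rw [degCard, card_filter]
  exact Fintype.sum_equiv (Equiv.addRight (j : ZMod n)) _ _ fun _ => rfl

lemma exists_mul_le_card_degPositions [NeZero n] (t : ℕ) (s : Finset ℕ) :
    ∃ a : ZMod n, #s * degCard σ t ≤ n * #(degPositions σ a t s) := by
  obtain ⟨a, -, ha⟩ := exists_le_of_sum_le univ_nonempty
    (f := fun _ : ZMod n => #s * degCard σ t) (g := fun a => n * #(degPositions σ a t s))
    (by rw [sum_const, ← mul_sum, sum_card_degPositions, card_univ, ZMod.card, smul_eq_mul])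
  exact ⟨a, ha⟩

lemma card_degPositions_add_one_le (a : ZMod n) (t w : ℕ) :
    #(degPositions σ (a + 1) t (range w)) ≤ #(degPositions σ a t (range w)) + 1 := by
  calc #(degPositions σ (a + 1) t (range w)) ≤ #(degPositions σ a t (range (w + 1))) := by
        refine card_le_card_of_injOn (· + 1) (fun j hj => ?_) fun x _ y _ h => Nat.succ_injective h
        simp only [degPositions, mem_coe, mem_filter, mem_range] at hj ⊢
        exact ⟨by omega, by simpa [add_assoc, add_comm (1 : ZMod n)] using hj.2⟩
    _ ≤ #(degPositions σ a t (range w)) + 1 := by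
        rw [degPositions, range_add_one, filter_insert]
        split_ifs
        · exact card_insert_le _ _
        · exact Nat.le_succ _

end Counts

theorem ZMod.exists_between_of_map_add_one_le {n : ℕ} [NeZero n] {f : ZMod n → ℕ}
    (hf : ∀ a, f (a + 1) ≤ f a + 1) {A B : ℕ} (hAB : A ≤ B) {x y : ZMod n} (hx : A ≤ f x)
    (hy : f y ≤ B) : ∃ z, A ≤ f z ∧ f z ≤ B := by
  classical
  have hk : ∃ k : ℕ, A ≤ f (y + k) := ⟨(x - y).val, by simpa using hx⟩
  have hspec := Nat.find_spec hk
  cases hfind : Nat.find hk with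
  | zero => exact ⟨y, by simpa [hfind] using hspec, hy⟩
  | succ k =>
    have hmin : ¬A ≤ f (y + k) := Nat.find_min hk (by omega)
    rw [hfind] at hspec
    have hstep := hf (y + k)
    rw [add_assoc] at hstep
    push_cast at hspec
    exact ⟨_, hspec, by omega⟩

section RichPair

variable {n : ℕ} (σ : ZMod n → Bool)

/-- Enough room in `X` for `μ₀` sinks and `μ₂` sources, and in `Y` for `μ₁` vertices of
out-degree one, to be chosen greedily `d`-apart; positions are read from the vertex `a`. -/
def IsRichPair (a : ZMod n) (d μ₀ μ₁ μ₂ : ℕ) (X Y : Finset ℕ) : Prop :=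
  (∀ x ∈ X, ∀ y ∈ Y, Apart d x y) ∧
  (2 * d + 1) * μ₀ ≤ #(degPositions σ a 0 X) + 2 * d ∧
  (μ₂ ≠ 0 → (2 * d + 1) * (μ₀ + μ₂) ≤ #(degPositions σ a 2 X) + 2 * d) ∧
  (2 * d + 1) * μ₁ ≤ #(degPositions σ a 1 Y) + 2 * d

variable {σ}

theorem IsRichPair.exists_apart {a : ZMod n} {d μ₀ μ₁ μ₂ : ℕ} {X Y : Finset ℕ}
    (h : IsRichPair σ a d μ₀ μ₁ μ₂ X Y) :
    ∃ Z₀ Z₁ Z₂ : Finset ℕ, Z₀ ∪ Z₁ ∪ Z₂ ⊆ X ∪ Y ∧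
      (↑(Z₀ ∪ Z₁ ∪ Z₂) : Set ℕ).Pairwise (Apart d) ∧
      #Z₀ = μ₀ ∧ #Z₁ = μ₁ ∧ #Z₂ = μ₂ ∧
      (∀ j ∈ Z₀, cycleOutDeg σ (a + j) = 0) ∧
      (∀ j ∈ Z₁, cycleOutDeg σ (a + j) = 1) ∧
      (∀ j ∈ Z₂, cycleOutDeg σ (a + j) = 2) := by
  obtain ⟨hXY, h₀, h₂, h₁⟩ := h
  obtain ⟨Z₀, hZ₀, hc₀, -, hsep₀⟩ :=
    exists_apart_subset d (degPositions σ a 0 X) μ₀ ∅ (by simp) fun _ => by simpa using h₀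
  obtain ⟨Z₂, hZ₂, hc₂, -, hsep₂₀⟩ :=
    exists_apart_subset d (degPositions σ a 2 X) μ₂ Z₀ (by simpa using hsep₀) (by rwa [hc₀])
  obtain ⟨Z₁, hZ₁, hc₁, -, hsep₁⟩ :=
    exists_apart_subset d (degPositions σ a 1 Y) μ₁ ∅ (by simp) fun _ => by simpa using h₁
  have hZX : Z₂ ∪ Z₀ ⊆ X :=
    union_subset (hZ₂.trans (filter_subset _ _)) (hZ₀.trans (filter_subset _ _))
  have hZY : Z₁ ⊆ Y := hZ₁.trans (filter_subset _ _)
  have hdeg {t : ℕ} {s Z : Finset ℕ} (hZ : Z ⊆ degPositions σ a t s) (j) (hj : j ∈ Z) :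
      cycleOutDeg σ (a + j) = t := (mem_filter.1 (hZ hj)).2
  have hunion : Z₀ ∪ Z₁ ∪ Z₂ = (Z₂ ∪ Z₀) ∪ Z₁ := by ext; simp only [mem_union]; tauto
  refine ⟨Z₀, Z₁, Z₂, hunion ▸ union_subset_union hZX hZY, ?_, hc₀, hc₁, hc₂,
    hdeg hZ₀, hdeg hZ₁, hdeg hZ₂⟩
  rw [hunion, coe_union, Set.pairwise_union_of_symm]
  exact ⟨hsep₂₀, by simpa using hsep₁, fun x hx y hy _ => hXY x (hZX hx) y (hZY hy)⟩

theorem isRichPair_of_lt {a : ZMod n} {d μ₀ μ₁ μ₂ u v : ℕ} {Y : Finset ℕ}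
    (hXY : ∀ x ∈ Ico u v, ∀ y ∈ Y, Apart d x y)
    (hX : (2 * d + 1) * (μ₀ + μ₂) < #(degPositions σ a 0 (Ico u v)))
    (hY : (2 * d + 1) * μ₁ ≤ #(degPositions σ a 1 Y) + 2 * d) :
    IsRichPair σ a d μ₀ μ₁ μ₂ (Ico u v) Y := by
  have := (card_degPositions_zero_le_and_two_le σ a u v).1
  refine ⟨hXY, ?_, fun _ => by omega, hY⟩
  nlinarith

end RichPair

section Asymptotics

lemma natCast_mul_ceil_div_le {K : ℕ} {x L δ : ℝ} (hx : 0 ≤ x) (hL : 0 < L) (hK : K ≤ δ * L) :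
    (K : ℝ) * ⌈x / L⌉₊ ≤ δ * x + K := by
  have hceil := Nat.ceil_lt_add_one (div_nonneg hx hL.le)
  calc (K : ℝ) * ⌈x / L⌉₊ ≤ K * (x / L + 1) := by gcongr
    _ = K / L * x + K := by ring
    _ ≤ δ * x + K := by gcongr; rwa [div_le_iff₀ hL]

lemma mul_two_mul_ceil_div_log_add_one_le {x : ℝ} (hx : exp (10 ^ 8) ≤ x) :
    10 ^ 5 * (2 * ⌈100 * x / log x⌉₊ + 1 : ℝ) ≤ x := by
  have hx8 : (10 : ℝ) ^ 8 ≤ x := by linarith [add_one_le_exp ((10 : ℝ) ^ 8)]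
  have hlog : (10 : ℝ) ^ 8 ≤ log x := (le_log_iff_exp_le (by positivity)).2 hx
  have hceil := Nat.ceil_lt_add_one (show 0 ≤ 100 * x / log x by positivity)
  have hdiv : 100 * x / log x ≤ 100 * x / 10 ^ 8 := by gcongr
  linarith

lemma mul_log_le_self {x : ℝ} (hx : 0 < x) (hlog : 2 * 10 ^ 6 ≤ log x) : 10 ^ 6 * log x ≤ x := by
  have := quadratic_le_exp_of_nonneg (hlog.trans' (by norm_num))
  rw [exp_log hx] at this
  nlinarith

end Asymptotics

section Windows

variable {n : ℕ} [NeZero n] (σ : ZMod n → Bool)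

lemma exists_cycleOutDeg_eq {t : ℕ} (ht : degCard σ t ≠ 0) : ∃ a, cycleOutDeg σ a = t := by
  obtain ⟨a, ha⟩ := card_pos.1 (Nat.pos_of_ne_zero ht)
  exact ⟨a, (mem_filter.1 ha).2⟩

theorem exists_isRichPair_of_few_sinks {d ℓ μ₀ μ₁ μ₂ : ℕ} (hℓ : ℓ ≤ n) (h02 : μ₀ + μ₂ ≤ 1)
    (hsink : μ₀ + μ₂ ≠ 0 → degCard σ 0 ≠ 0)
    (h1 : (2 * d + 1) * μ₁ + 2 * degCard σ 0 + d + 2 ≤ ℓ + 2 * d) :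
    ∃ a, IsRichPair σ a d μ₀ μ₁ μ₂ {0} (Ico (d + 1) ℓ) := by
  obtain ⟨a, ha₀, ha₂⟩ : ∃ a : ZMod n,
      (μ₀ ≠ 0 → cycleOutDeg σ a = 0) ∧ (μ₂ ≠ 0 → cycleOutDeg σ a = 2) := by
    rcases Nat.eq_zero_or_pos μ₀ with h₀ | h₀
    · rcases Nat.eq_zero_or_pos μ₂ with h₂ | h₂
      · exact ⟨0, by omega, by omega⟩
      · obtain ⟨a, ha⟩ := exists_cycleOutDeg_eq σ (degCard_zero_eq_two σ ▸ hsink (by omega))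
        exact ⟨a, by omega, fun _ => ha⟩
    · obtain ⟨a, ha⟩ := exists_cycleOutDeg_eq σ (hsink (by omega))
      exact ⟨a, fun _ => ha, by omega⟩
  have hY := sub_le_card_degPositions σ a (d + 1) ℓ
  have hY₀ := card_degPositions_le_degCard σ a 0 (s := Ico (d + 1) ℓ)
    fun j hj => mem_range.2 ((mem_Ico.1 hj).2.trans_le hℓ)
  have hY₂ := (card_degPositions_zero_le_and_two_le σ a (d + 1) ℓ).2
  refine ⟨a, fun x hx y hy => ?_, ?_, fun h₂ => ?_, by omega⟩
  · rw [mem_singleton] at hx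
    rw [mem_Ico] at hy
    left; omega
  · obtain rfl | rfl : μ₀ = 0 ∨ μ₀ = 1 := by omega
    · simp
    · simp [card_degPositions_singleton_zero, ha₀]
  · obtain ⟨rfl, rfl⟩ : μ₀ = 0 ∧ μ₂ = 1 := by omega
    simp [card_degPositions_singleton_zero, ha₂ one_ne_zero]

theorem exists_isRichPair_of_few_transits {d ℓ μ₀ μ₁ μ₂ : ℕ} (hℓ : ℓ ≤ n) (h1 : μ₁ ≤ 1)
    (htransit : μ₁ ≠ 0 → degCard σ 1 ≠ 0)
    (h02 : 2 * ((2 * d + 1) * (μ₀ + μ₂)) + degCard σ 1 + d + 3 ≤ ℓ) :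
    ∃ a, IsRichPair σ a d μ₀ μ₁ μ₂ (Ico (d + 1) ℓ) {0} := by
  obtain ⟨a, ha⟩ : ∃ a : ZMod n, μ₁ ≠ 0 → cycleOutDeg σ a = 1 := by
    rcases Nat.eq_zero_or_pos μ₁ with h₁ | h₁
    · exact ⟨0, by omega⟩
    · obtain ⟨a, ha⟩ := exists_cycleOutDeg_eq σ (htransit (by omega))
      exact ⟨a, fun _ => ha⟩
  have hX := sub_le_card_degPositions σ a (d + 1) ℓ
  have hX₁ := card_degPositions_le_degCard σ a 1 (s := Ico (d + 1) ℓ)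
    fun j hj => mem_range.2 ((mem_Ico.1 hj).2.trans_le hℓ)
  refine ⟨a, isRichPair_of_lt (fun x hx y hy => ?_) (by omega) ?_⟩
  · rw [mem_Ico] at hx
    rw [mem_singleton] at hy
    right; omega
  · obtain rfl | rfl : μ₁ = 0 ∨ μ₁ = 1 := by omega
    · simp
    · simp [card_degPositions_singleton_zero, ha one_ne_zero]

/-- Slide a window of length `2 * h + d` around the cycle until its number of sinks lies
between the two thresholds; then the half with more sinks serves `Z₀, Z₂`, the other `Z₁`. -/
theorem exists_isRichPair_of_many {d h μ₀ μ₁ μ₂ : ℕ} (hn : n ≤ 200 * (2 * h + d))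
    (h0 : 200 * (2 * ((2 * d + 1) * (μ₀ + μ₂)) + d + 2) ≤ degCard σ 0)
    (h1 : 200 * (2 * ((2 * d + 1) * μ₁) + d + 3) ≤ degCard σ 1)
    (hh : 2 * ((2 * d + 1) * (μ₀ + μ₂)) + (2 * d + 1) * μ₁ + d + 3 ≤ h) :
    ∃ a X Y, X ∪ Y ⊆ range (2 * h + d) ∧ IsRichPair σ a d μ₀ μ₁ μ₂ X Y := by
  set W := range (2 * h + d)
  have hdense {t B : ℕ} (hB : 200 * B ≤ degCard σ t) :
      ∃ a, B ≤ #(degPositions σ a t W) := by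
    obtain ⟨a, ha⟩ := exists_mul_le_card_degPositions σ t W
    refine ⟨a, Nat.le_of_mul_le_mul_left ?_ (NeZero.pos n)⟩
    calc n * B ≤ 200 * (2 * h + d) * B := Nat.mul_le_mul_right _ hn
      _ = #W * (200 * B) := by rw [card_range]; ring
      _ ≤ #W * degCard σ t := Nat.mul_le_mul_left _ hB
      _ ≤ _ := ha
  obtain ⟨x, hx⟩ := hdense h0
  obtain ⟨y, hy⟩ := hdense h1
  have hfy := card_degPositions_le_sub σ y 0 (2 * h + d)
  rw [← range_eq_Ico] at hfy
  change 2 * #(degPositions σ y 0 W) + #(degPositions σ y 1 W) ≤ _ at hfy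
  obtain ⟨z, hz₁, hz₂⟩ := ZMod.exists_between_of_map_add_one_le
    (f := fun a => #(degPositions σ a 0 W)) (fun a => card_degPositions_add_one_le σ a 0 _)
    (A := 2 * ((2 * d + 1) * (μ₀ + μ₂)) + d + 2) (B := h - 1 - (2 * d + 1) * μ₁)
    (by omega) hx (y := y) (by omega)
  have hsplit : #(degPositions σ z 0 W) = #(degPositions σ z 0 (Ico 0 h)) +
      #(degPositions σ z 0 (Ico h (h + d))) + #(degPositions σ z 0 (Ico (h + d) (2 * h + d))) := by
    have hW : W = (Ico 0 h ∪ Ico h (h + d)) ∪ Ico (h + d) (2 * h + d) := by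
      ext j; simp only [W, mem_range, mem_union, mem_Ico]; omega
    rw [hW, card_degPositions_union, card_degPositions_union] <;>
      simp only [disjoint_left, mem_union, mem_Ico] <;> omega
  have hgap : #(degPositions σ z 0 (Ico h (h + d))) ≤ d :=
    (card_filter_le _ _).trans (by simp)
  have hlow := sub_le_card_degPositions σ z 0 h
  have hhigh := sub_le_card_degPositions σ z (h + d) (2 * h + d)
  have hsub : Ico 0 h ∪ Ico (h + d) (2 * h + d) ⊆ W := by
    intro j; simp only [W, mem_range, mem_union, mem_Ico]; omega
  rcases le_total #(degPositions σ z 0 (Ico 0 h)) #(degPositions σ z 0 (Ico (h + d) (2 * h + d)))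
    with hle | hle
  · refine ⟨z, _, _, union_comm (Ico 0 h) _ ▸ hsub,
      isRichPair_of_lt (fun x hx y hy => ?_) (by omega) (by omega)⟩
    rw [mem_Ico] at hx hy
    right; omega
  · refine ⟨z, _, _, hsub, isRichPair_of_lt (fun x hx y hy => ?_) (by omega) (by omega)⟩
    rw [mem_Ico] at hx hy
    left; omega

theorem exists_isRichPair {L : ℝ} {d μ₀ μ₁ μ₂ : ℕ} (hdL : 10 ^ 5 * (2 * d + 1 : ℝ) ≤ L)
    (hLn : 10 ^ 6 * L ≤ n) (h02 : μ₀ + μ₂ = ⌈(2 * degCard σ 0 : ℝ) / L⌉₊)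
    (h1 : μ₁ = ⌈((n : ℝ) - 2 * degCard σ 0) / L⌉₊) :
    ∃ a X Y, X ∪ Y ⊆ range (2 * (n / 300) + d) ∧ IsRichPair σ a d μ₀ μ₁ μ₂ X Y := by
  have hm : (degCard σ 1 : ℝ) = n - 2 * degCard σ 0 := by
    have := congrArg (Nat.cast (R := ℝ)) (degCard_add σ)
    push_cast [← degCard_zero_eq_two] at this
    linarith
  rw [← hm] at h1
  set h := n / 300
  have hh₁ : (300 * h : ℝ) ≤ n := by exact_mod_cast Nat.mul_div_le n 300
  have hh₂ : (n : ℝ) ≤ 300 * h + 300 := by exact_mod_cast (by omega : n ≤ 300 * h + 300)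
  have hL : 0 < L := by linarith [(Nat.cast_nonneg d : (0 : ℝ) ≤ d)]
  have hδ : ((2 * d + 1 : ℕ) : ℝ) ≤ 1 / 10 ^ 5 * L := by push_cast; linarith
  have hK02 := natCast_mul_ceil_div_le (x := 2 * degCard σ 0) (by positivity) hL hδ
  have hK1 := natCast_mul_ceil_div_le (x := degCard σ 1) (by positivity) hL hδ
  rw [← h02] at hK02
  rw [← h1] at hK1
  push_cast at hK02 hK1
  have hℓ : 2 * h + d ≤ n := (Nat.cast_le (α := ℝ)).1 (by push_cast; linarith)
  have hh : 1 ≤ h := (Nat.cast_le (α := ℝ)).1 (by push_cast; linarith)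
  rcases le_or_gt (2 * degCard σ 0 : ℝ) L with hsinks | hsinks
  · obtain ⟨a, ha⟩ := exists_isRichPair_of_few_sinks σ (d := d) (μ₁ := μ₁) hℓ
      (h02 ▸ Nat.ceil_le.2 (by rwa [Nat.cast_one, div_le_one hL]))
      (fun hne hlam => hne (by rw [h02, hlam]; simp))
      ((Nat.cast_le (α := ℝ)).1 (by push_cast; linarith))
    refine ⟨a, _, _, fun j => ?_, ha⟩
    simp only [mem_union, mem_singleton, mem_Ico, mem_range]
    omega
  rcases le_or_gt (degCard σ 1 : ℝ) L with htransits | htransits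
  · obtain ⟨a, ha⟩ := exists_isRichPair_of_few_transits σ (d := d) (μ₀ := μ₀) (μ₂ := μ₂) hℓ
      (h1 ▸ Nat.ceil_le.2 (by rwa [Nat.cast_one, div_le_one hL]))
      (fun hne hm => hne (by rw [h1, hm]; simp))
      ((Nat.cast_le (α := ℝ)).1 (by push_cast; linarith))
    refine ⟨a, _, _, fun j => ?_, ha⟩
    simp only [mem_union, mem_singleton, mem_Ico, mem_range]
    omega
  exact exists_isRichPair_of_many σ ((Nat.cast_le (α := ℝ)).1 (by push_cast; linarith))
    ((Nat.cast_le (α := ℝ)).1 (by push_cast; linarith))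
    ((Nat.cast_le (α := ℝ)).1 (by push_cast; linarith))
    ((Nat.cast_le (α := ℝ)).1 (by push_cast; linarith))

end Windows

/-- For large `n`: if `C` is an oriented `n`-cycle with exactly `λ`
vertices of out-degree 0, `μ₀ + μ₂ = ⌈2λ/log n⌉` and `μ₁ = ⌈(n−2λ)/log n⌉`, then there is
a subpath `P ⊆ C` of length at most `n/100` (given by a starting vertex `a` and a length
`L`, with vertices `a, a+1, …, a+L`) and sets `Z₀, Z₁, Z₂` of positions on `P`, pairwise
at distance at least `100 log n/loglog n` along `P`, with `|Z_i| = μ_i` and every vertex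
of `Z_i` of out-degree `i` in `C`. -/
theorem stmt8 :
    ∃ n₀ : ℕ, ∀ n : ℕ, n₀ ≤ n → ∀ (lam μ₀ μ₂ : ℕ) (σ : ZMod n → Bool),
      {i : ZMod n | cycleOutDeg σ i = 0}.ncard = lam →
      μ₀ + μ₂ = ⌈(2 * lam : ℝ) / Real.log n⌉₊ →
      ∀ μ₁ : ℕ, μ₁ = ⌈((n : ℝ) - 2 * lam) / Real.log n⌉₊ →
      ∃ (a : ZMod n) (L : ℕ), (L : ℝ) ≤ (n : ℝ) / 100 ∧
        ∃ Z₀ Z₁ Z₂ : Finset ℕ,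
          (∀ j ∈ Z₀ ∪ Z₁ ∪ Z₂, j ≤ L) ∧
          (∀ j ∈ Z₀ ∪ Z₁ ∪ Z₂, ∀ j' ∈ Z₀ ∪ Z₁ ∪ Z₂, j ≠ j' →
            100 * Real.log n / Real.log (Real.log n) ≤ |(j : ℝ) - (j' : ℝ)|) ∧
          Z₀.card = μ₀ ∧ Z₁.card = μ₁ ∧ Z₂.card = μ₂ ∧
          (∀ j ∈ Z₀, cycleOutDeg σ (a + j) = 0) ∧
          (∀ j ∈ Z₁, cycleOutDeg σ (a + j) = 1) ∧
          (∀ j ∈ Z₂, cycleOutDeg σ (a + j) = 2) := by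
  refine ⟨⌈exp (exp (10 ^ 8))⌉₊, fun n hn lam μ₀ μ₂ σ hlam h02 μ₁ h1 => ?_⟩
  have hnexp : exp (exp (10 ^ 8)) ≤ n := Nat.ceil_le.1 hn
  have hn0 : (0 : ℝ) < n := (exp_pos _).trans_le hnexp
  have hlog : exp (10 ^ 8) ≤ log n := (le_log_iff_exp_le hn0).2 hnexp
  have : NeZero n := ⟨by rintro rfl; simp at hn0⟩
  obtain rfl : degCard σ 0 = lam := by
    rw [← hlam, Set.ncard_eq_toFinset_card', Set.toFinset_ofPred]; rfl
  have hdL := mul_two_mul_ceil_div_log_add_one_le hlog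
  have hLn := mul_log_le_self hn0 (by linarith [add_one_le_exp ((10 : ℝ) ^ 8)])
  obtain ⟨a, X, Y, hXY, hrich⟩ := exists_isRichPair σ hdL hLn h02 h1
  obtain ⟨Z₀, Z₁, Z₂, hZ, hsep, hc₀, hc₁, hc₂, hd₀, hd₁, hd₂⟩ := hrich.exists_apart
  refine ⟨a, _, ?_, Z₀, Z₁, Z₂, fun j hj => (mem_range.1 (hXY (hZ hj))).le,
    fun j hj j' hj' hne => (Nat.le_ceil _).trans (hsep hj hj' hne).le_abs_sub,
    hc₀, hc₁, hc₂, hd₀, hd₁, hd₂⟩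
  have : ((n / 300 : ℕ) : ℝ) ≤ n / 300 := Nat.cast_div_le
  push_cast
  linarith
end

section
/- Let D be an n-vertex digraph, X ⊆ V(D), and suppose D satisfies: (a) for every v ∈ V(D) and each sign ⋄ ∈ {+,−}, the number of ⋄-neighbours of v outside X is at least log n/500; and (b) for any sets A, B ⊆ V(D) and ⋄ ∈ {+,−} with |A| ≤ n·loglog n/log n and every v ∈ A having at least (log n)^{2/3} ⋄-neighbours in B, one has |B| ≥ |A|(log n)^{1/3}. Let B⁺, B⁻, A⁺, A⁻ ⊆ V(D)∖X be disjoint with |X|, |B⁺|, |B⁻| ≤ n·logloglog n/log n, and suppose every v ∈ V(D) and ⋄ ∈ {+,−} satisfies d^⋄(v, B^⋄ ∪ A^⋄) ≥ log n/5000. Define B₀^⋄ = ∅ and, for i ≥ 1, B_i^⋄ = {v ∈ B^⋄ : d^+(v, B^+_{i−1} ∪ A^+) ≥ d and d^−(v, B^−_{i−1} ∪ A^−) ≥ d} where d = log n/10⁴ and B = B⁺ ∪ B⁻, B_i = B_i^+ ∪ B_i^−. Then for every i ≥ 0, |B ∖ B_i| ≤ |B|/(log n)^{i/3}; in particular B ∖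 B_i = ∅ once i ≥ 3 log n/loglog n + 1. -/
set_option maxHeartbeats 2000000 in
/-- Claim `decreasingaway`. Under the pseudorandomness-type
hypotheses (a), (b) on the digraph `D` (given by its adjacency relation `Adj` on `[n]`)
and the hypotheses on the disjoint sets `B⁺, B⁻, A⁺, A⁻ ⊆ V(D)∖X`, the iteratively
defined sets `B_i^± ` (with threshold `d = log n/10⁴`) satisfy
`|B ∖ B_i| ≤ |B|/(log n)^{i/3}` for all `i ≥ 0`; in particular `B ∖ B_i = ∅` once
`i ≥ 3 log n/loglog n + 1`. -/
theorem stmt15 :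
    ∃ n₀ : ℕ, ∀ n : ℕ, n₀ ≤ n →
    ∀ (Adj : Fin n → Fin n → Prop) (X Bp Bm Ap Am : Set (Fin n)),
    -- (a): minimum in/out-degree outside X
    (∀ v : Fin n,
      Real.log n / 500 ≤ ({u | u ∉ X ∧ Adj v u}).ncard ∧
      Real.log n / 500 ≤ ({u | u ∉ X ∧ Adj u v}).ncard) →
    -- (b): expansion of small sets, out-neighbourhoods
    (∀ A B : Set (Fin n), (A.ncard : ℝ) ≤ n * Real.log (Real.log n) / Real.log n →
      (∀ v ∈ A, (Real.log n) ^ (2 / 3 : ℝ) ≤ ({u | u ∈ B ∧ Adj v u}).ncard) →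
      (A.ncard : ℝ) * (Real.log n) ^ (1 / 3 : ℝ) ≤ B.ncard) →
    -- (b): expansion of small sets, in-neighbourhoods
    (∀ A B : Set (Fin n), (A.ncard : ℝ) ≤ n * Real.log (Real.log n) / Real.log n →
      (∀ v ∈ A, (Real.log n) ^ (2 / 3 : ℝ) ≤ ({u | u ∈ B ∧ Adj u v}).ncard) →
      (A.ncard : ℝ) * (Real.log n) ^ (1 / 3 : ℝ) ≤ B.ncard) →
    -- B⁺, B⁻, A⁺, A⁻ pairwise disjoint and contained in V(D)∖X
    ([Bp, Bm, Ap, Am].Pairwise Disjoint) →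
    (Bp ∪ Bm ∪ Ap ∪ Am ⊆ Xᶜ) →
    -- size bounds
    ((X.ncard : ℝ) ≤ n * Real.log (Real.log (Real.log n)) / Real.log n) →
    ((Bp.ncard : ℝ) ≤ n * Real.log (Real.log (Real.log n)) / Real.log n) →
    ((Bm.ncard : ℝ) ≤ n * Real.log (Real.log (Real.log n)) / Real.log n) →
    -- minimum degree into B^⋄ ∪ A^⋄
    (∀ v : Fin n,
      Real.log n / 5000 ≤ ({u | u ∈ Bp ∪ Ap ∧ Adj v u}).ncard ∧
      Real.log n / 5000 ≤ ({u | u ∈ Bm ∪ Am ∧ Adj u v}).ncard) →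
    -- the iteratively defined sets B_i^±
    ∀ Bpi Bmi : ℕ → Set (Fin n),
    Bpi 0 = ∅ → Bmi 0 = ∅ →
    (∀ i : ℕ, Bpi (i + 1) = {v | v ∈ Bp ∧
        Real.log n / 10000 ≤ ({u | u ∈ Bpi i ∪ Ap ∧ Adj v u}).ncard ∧
        Real.log n / 10000 ≤ ({u | u ∈ Bmi i ∪ Am ∧ Adj u v}).ncard}) →
    (∀ i : ℕ, Bmi (i + 1) = {v | v ∈ Bm ∧
        Real.log n / 10000 ≤ ({u | u ∈ Bpi i ∪ Ap ∧ Adj v u}).ncard ∧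
        Real.log n / 10000 ≤ ({u | u ∈ Bmi i ∪ Am ∧ Adj u v}).ncard}) →
    -- conclusions
    (∀ i : ℕ, (((Bp ∪ Bm) \ (Bpi i ∪ Bmi i)).ncard : ℝ) ≤
        ((Bp ∪ Bm).ncard : ℝ) / (Real.log n) ^ ((i : ℝ) / 3)) ∧
    (∀ i : ℕ, 3 * Real.log n / Real.log (Real.log n) + 1 ≤ (i : ℝ) →
        (Bp ∪ Bm) \ (Bpi i ∪ Bmi i) = ∅) := by
  refine ⟨Nat.ceil (Real.exp (10^12)) + 1, ?_⟩
  intro n hn Adj X Bp Bm Ap Am ha hb hb' hdisj hsubX hX hBp hBm hdeg Bpi Bmi h0p h0m hip him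
  set L := Real.log n with hLdef
  have hn1 : 1 ≤ n := le_trans (Nat.le_add_left 1 _) hn
  have hnR : Real.exp (10^12) ≤ (n : ℝ) := by
    have h1 : (Nat.ceil (Real.exp (10^12)) : ℝ) ≤ (n : ℝ) := by
      exact_mod_cast le_trans (Nat.le_succ _) hn
    exact le_trans (Nat.le_ceil _) h1
  have hL : (10:ℝ)^12 ≤ L := by
    have := Real.log_le_log (Real.exp_pos _) hnR
    rwa [Real.log_exp] at this
  have hLpos : 0 < L := lt_of_lt_of_le (by norm_num) hL
  have hnpos : (0:ℝ) < n := by exact_mod_cast hn1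
  -- lower bound on loglog n
  have hll24 : (24:ℝ) ≤ Real.log L := by
    rw [Real.le_log_iff_exp_le hLpos]
    have h1 : Real.exp 24 = (Real.exp 1)^(24:ℕ) := by
      rw [← Real.exp_nat_mul]; norm_num
    have h2 : (Real.exp 1)^(24:ℕ) ≤ (2.7182818286:ℝ)^(24:ℕ) :=
      pow_le_pow_left₀ (le_of_lt (Real.exp_pos 1)) (le_of_lt Real.exp_one_lt_d9) _
    have h3 : (2.7182818286:ℝ)^(24:ℕ) ≤ 10^12 := by norm_num
    calc Real.exp 24 = (Real.exp 1)^(24:ℕ) := h1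
      _ ≤ (2.7182818286:ℝ)^(24:ℕ) := h2
      _ ≤ 10^12 := h3
      _ ≤ L := hL
  have hllpos : 0 < Real.log L := by linarith
  -- L^(1/3) ≥ 10^4
  have h13 : (10:ℝ)^4 ≤ L ^ (1/3 : ℝ) := by
    have h1 : ((10:ℝ)^12) ^ (1/3 : ℝ) ≤ L ^ (1/3 : ℝ) :=
      Real.rpow_le_rpow (by norm_num) hL (by norm_num)
    have h2 : ((10:ℝ)^12) ^ (1/3 : ℝ) = (10:ℝ)^4 := by
      rw [← Real.rpow_natCast (10:ℝ) 12, ← Real.rpow_mul (by norm_num : (0:ℝ) ≤ 10),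
        show ((12:ℕ):ℝ) * (1/3) = ((4:ℕ):ℝ) by norm_num, Real.rpow_natCast]
    linarith
  have h13pos : (0:ℝ) < L ^ (1/3 : ℝ) := Real.rpow_pos_of_pos hLpos _
  have h13gt1 : (1:ℝ) < L ^ (1/3 : ℝ) := by linarith
  -- L^(2/3) ≤ L/10000
  have h23 : L ^ (2/3 : ℝ) ≤ L / 10000 := by
    have h23pos : (0:ℝ) < L ^ (2/3 : ℝ) := Real.rpow_pos_of_pos hLpos _
    have hmul : L ^ (2/3 : ℝ) * L ^ (1/3 : ℝ) = L := by
      rw [← Real.rpow_add hLpos]; norm_num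
    rw [le_div_iff₀ (by norm_num : (0:ℝ) < 10000)]
    calc L ^ (2/3 : ℝ) * 10000 ≤ L ^ (2/3 : ℝ) * L ^ (1/3 : ℝ) := by
          apply mul_le_mul_of_nonneg_left _ (le_of_lt h23pos)
          linarith
      _ = L := hmul
  -- subset facts
  have hsubP : ∀ i, Bpi i ⊆ Bp := by
    intro i
    cases i with
    | zero => rw [h0p]; exact Set.empty_subset _
    | succ i => rw [hip i]; exact fun v hv => hv.1
  have hsubM : ∀ i, Bmi i ⊆ Bm := by
    intro i
    cases i with
    | zero => rw [h0m]; exact Set.empty_subset _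
    | succ i => rw [him i]; exact fun v hv => hv.1
  have hPM : Disjoint Bp Bm := by
    rcases List.pairwise_cons.mp hdisj with ⟨h1, _⟩
    exact h1 Bm (by simp)
  -- bound on |Bp ∪ Bm|
  have hBcard : ((Bp ∪ Bm).ncard : ℝ) ≤ (n:ℝ) * Real.log L / L := by
    have h1 : (Bp ∪ Bm).ncard ≤ Bp.ncard + Bm.ncard := Set.ncard_union_le _ _
    have h2 : ((Bp ∪ Bm).ncard : ℝ) ≤ (Bp.ncard : ℝ) + (Bm.ncard : ℝ) := by exact_mod_cast h1
    -- 2 * log(log L) ≤ log L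
    have hlll : 2 * Real.log (Real.log L) ≤ Real.log L := by
      set t := Real.log L with ht
      have hsqrt : Real.log t = 2 * Real.log (Real.sqrt t) := by
        rw [Real.log_sqrt (by linarith)]; ring
      have h4 : Real.log (Real.sqrt t) ≤ Real.sqrt t - 1 :=
        Real.log_le_sub_one_of_pos (Real.sqrt_pos.mpr (by linarith))
      have h5 : (4:ℝ) ≤ Real.sqrt t := by
        rw [show (4:ℝ) = Real.sqrt 16 by
          rw [show (16:ℝ) = 4^2 by norm_num, Real.sqrt_sq (by norm_num)]]
        exact Real.sqrt_le_sqrt (by linarith)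
      have h6 : Real.sqrt t * Real.sqrt t = t := Real.mul_self_sqrt (by linarith)
      nlinarith [Real.sqrt_nonneg t]
    have h7 : (Bp.ncard : ℝ) + (Bm.ncard : ℝ) ≤ 2 * ((n:ℝ) * Real.log (Real.log L) / L) := by
      linarith
    have h8 : 2 * ((n:ℝ) * Real.log (Real.log L) / L) ≤ (n:ℝ) * Real.log L / L := by
      rw [show 2 * ((n:ℝ) * Real.log (Real.log L) / L)
          = (2 * ((n:ℝ) * Real.log (Real.log L))) / L by ring,
        div_le_div_iff₀ hLpos hLpos]
      nlinarith [mul_nonneg (mul_nonneg (le_of_lt hnpos)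
        (by linarith : (0:ℝ) ≤ Real.log L - 2 * Real.log (Real.log L))) (le_of_lt hLpos)]
    linarith
  -- the key induction
  have key : ∀ i, (((Bp ∪ Bm) \ (Bpi i ∪ Bmi i)).ncard : ℝ) ≤
      ((Bp ∪ Bm).ncard : ℝ) / L ^ ((i:ℝ)/3) := by
    intro i
    induction i with
    | zero =>
      rw [h0p, h0m]
      simp only [Set.union_empty, Set.diff_empty, Nat.cast_zero, zero_div, Real.rpow_zero,
        div_one]
      exact le_refl _
    | succ i ih =>
      set S : Set (Fin n) := (Bp ∪ Bm) \ (Bpi (i+1) ∪ Bmi (i+1)) with hS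
      set Sp : Set (Fin n) :=
        {v ∈ S | ((({u | u ∈ Bpi i ∪ Ap ∧ Adj v u}).ncard : ℝ) < L/10000)} with hSp
      set Sm : Set (Fin n) := S \ Sp with hSm
      -- every v in Sm has small in-degree into Bmi i ∪ Am
      have hSmDeg0 : ∀ v ∈ Sm, ((({u | u ∈ Bmi i ∪ Am ∧ Adj u v}).ncard : ℝ) < L/10000) := by
        intro v hv
        obtain ⟨hvS, hvnSp⟩ := hv
        have hout : L/10000 ≤ (({u | u ∈ Bpi i ∪ Ap ∧ Adj v u}).ncard : ℝ) := by
          by_contra hc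
          exact hvnSp ⟨hvS, lt_of_not_ge hc⟩
        by_contra hc
        push_neg at hc
        obtain ⟨hvB, hvnB⟩ := hvS
        rcases hvB with hvB | hvB
        · exact hvnB (Or.inl (by rw [hip i]; exact ⟨hvB, hout, hc⟩))
        · exact hvnB (Or.inr (by rw [him i]; exact ⟨hvB, hout, hc⟩))
      -- Sp expands into Bp \ Bpi i
      have hSpDeg : ∀ v ∈ Sp,
          L ^ (2/3 : ℝ) ≤ ((({u | u ∈ Bp \ Bpi i ∧ Adj v u}).ncard : ℝ)) := by
        intro v hv
        obtain ⟨_, hvsmall⟩ := hv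
        have h1 : L / 5000 ≤ (({u | u ∈ Bp ∪ Ap ∧ Adj v u}).ncard : ℝ) := (hdeg v).1
        have hsub : {u | u ∈ Bp ∪ Ap ∧ Adj v u} ⊆
            {u | u ∈ Bpi i ∪ Ap ∧ Adj v u} ∪ {u | u ∈ Bp \ Bpi i ∧ Adj v u} := by
          rintro u ⟨hu, hadj⟩
          by_cases hc : u ∈ Bpi i ∪ Ap
          · exact Or.inl ⟨hc, hadj⟩
          · rcases hu with hu | hu
            · exact Or.inr ⟨⟨hu, fun h => hc (Or.inl h)⟩, hadj⟩
            · exact absurd (Or.inr hu) hc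
        have h2 := Set.ncard_le_ncard hsub (Set.toFinite _)
        have h3 := Set.ncard_union_le {u | u ∈ Bpi i ∪ Ap ∧ Adj v u}
          {u | u ∈ Bp \ Bpi i ∧ Adj v u}
        have h4 : (({u | u ∈ Bp ∪ Ap ∧ Adj v u}).ncard : ℝ) ≤
            (({u | u ∈ Bpi i ∪ Ap ∧ Adj v u}).ncard : ℝ) +
            (({u | u ∈ Bp \ Bpi i ∧ Adj v u}).ncard : ℝ) := by
          exact_mod_cast le_trans h2 h3
        linarith
      -- Sm expands into Bm \ Bmi i
      have hSmDeg : ∀ v ∈ Sm,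
          L ^ (2/3 : ℝ) ≤ ((({u | u ∈ Bm \ Bmi i ∧ Adj u v}).ncard : ℝ)) := by
        intro v hv
        have hvsmall := hSmDeg0 v hv
        have h1 : L / 5000 ≤ (({u | u ∈ Bm ∪ Am ∧ Adj u v}).ncard : ℝ) := (hdeg v).2
        have hsub : {u | u ∈ Bm ∪ Am ∧ Adj u v} ⊆
            {u | u ∈ Bmi i ∪ Am ∧ Adj u v} ∪ {u | u ∈ Bm \ Bmi i ∧ Adj u v} := by
          rintro u ⟨hu, hadj⟩
          by_cases hc : u ∈ Bmi i ∪ Am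
          · exact Or.inl ⟨hc, hadj⟩
          · rcases hu with hu | hu
            · exact Or.inr ⟨⟨hu, fun h => hc (Or.inl h)⟩, hadj⟩
            · exact absurd (Or.inr hu) hc
        have h2 := Set.ncard_le_ncard hsub (Set.toFinite _)
        have h3 := Set.ncard_union_le {u | u ∈ Bmi i ∪ Am ∧ Adj u v}
          {u | u ∈ Bm \ Bmi i ∧ Adj u v}
        have h4 : (({u | u ∈ Bm ∪ Am ∧ Adj u v}).ncard : ℝ) ≤
            (({u | u ∈ Bmi i ∪ Am ∧ Adj u v}).ncard : ℝ) +
            (({u | u ∈ Bm \ Bmi i ∧ Adj u v}).ncard : ℝ) := by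
          exact_mod_cast le_trans h2 h3
        linarith
      -- size bounds to apply expansion
      have hSpB : Sp ⊆ Bp ∪ Bm := fun v hv => hv.1.1
      have hSmB : Sm ⊆ Bp ∪ Bm := fun v hv => hv.1.1
      have hSpcard : (Sp.ncard : ℝ) ≤ (n:ℝ) * Real.log L / L := by
        have := Set.ncard_le_ncard hSpB (Set.toFinite _)
        have h' : (Sp.ncard : ℝ) ≤ ((Bp ∪ Bm).ncard : ℝ) := by exact_mod_cast this
        linarith
      have hSmcard : (Sm.ncard : ℝ) ≤ (n:ℝ) * Real.log L / L := by
        have := Set.ncard_le_ncard hSmB (Set.toFinite _)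
        have h' : (Sm.ncard : ℝ) ≤ ((Bp ∪ Bm).ncard : ℝ) := by exact_mod_cast this
        linarith
      have hexp1 : (Sp.ncard : ℝ) * L ^ (1/3 : ℝ) ≤ ((Bp \ Bpi i).ncard : ℝ) :=
        hb Sp (Bp \ Bpi i) hSpcard hSpDeg
      have hexp2 : (Sm.ncard : ℝ) * L ^ (1/3 : ℝ) ≤ ((Bm \ Bmi i).ncard : ℝ) :=
        hb' Sm (Bm \ Bmi i) hSmcard hSmDeg
      -- |B \ B_i| = |Bp \ Bpi i| + |Bm \ Bmi i|
      have hseteq : (Bp ∪ Bm) \ (Bpi i ∪ Bmi i) = (Bp \ Bpi i) ∪ (Bm \ Bmi i) := by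
        ext v
        constructor
        · rintro ⟨hv, hvn⟩
          rcases hv with hv | hv
          · exact Or.inl ⟨hv, fun h => hvn (Or.inl h)⟩
          · exact Or.inr ⟨hv, fun h => hvn (Or.inr h)⟩
        · rintro (⟨hv, hvn⟩ | ⟨hv, hvn⟩)
          · refine ⟨Or.inl hv, ?_⟩
            rintro (h | h)
            · exact hvn h
            · exact (hPM.ne_of_mem hv (hsubM i h)) rfl
          · refine ⟨Or.inr hv, ?_⟩
            rintro (h | h)
            · exact (hPM.ne_of_mem (hsubP i h) hv).symm rfl
            · exact hvn h
      have hdisj' : Disjoint (Bp \ Bpi i) (Bm \ Bmi i) :=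
        Disjoint.mono Set.diff_subset Set.diff_subset hPM
      have hsplit : ((Bp ∪ Bm) \ (Bpi i ∪ Bmi i)).ncard =
          (Bp \ Bpi i).ncard + (Bm \ Bmi i).ncard := by
        rw [hseteq]
        exact Set.ncard_union_eq hdisj' (Set.toFinite _) (Set.toFinite _)
      -- S ⊆ Sp ∪ Sm, so ncard S ≤ ncard Sp + ncard Sm
      have hScard : (S.ncard : ℝ) ≤ (Sp.ncard : ℝ) + (Sm.ncard : ℝ) := by
        have hsub : S ⊆ Sp ∪ Sm := by
          intro v hv
          by_cases hc : v ∈ Sp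
          · exact Or.inl hc
          · exact Or.inr ⟨hv, hc⟩
        have h1 := le_trans (Set.ncard_le_ncard hsub (Set.toFinite _))
          (Set.ncard_union_le _ _)
        exact_mod_cast h1
      -- combine
      have hmain : (S.ncard : ℝ) * L ^ (1/3 : ℝ) ≤ ((Bp ∪ Bm).ncard : ℝ) / L ^ ((i:ℝ)/3) := by
        have h1 : (S.ncard : ℝ) * L ^ (1/3 : ℝ) ≤
            ((Bp \ Bpi i).ncard : ℝ) + ((Bm \ Bmi i).ncard : ℝ) := by
          have h0 := mul_le_mul_of_nonneg_right hScard (le_of_lt h13pos)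
          rw [add_mul] at h0
          linarith
        have h2 : ((Bp \ Bpi i).ncard : ℝ) + ((Bm \ Bmi i).ncard : ℝ) =
            (((Bp ∪ Bm) \ (Bpi i ∪ Bmi i)).ncard : ℝ) := by
          rw [hsplit]; push_cast; ring
        linarith
      have hmul := mul_le_mul_of_nonneg_right hmain
        (le_of_lt (Real.rpow_pos_of_pos hLpos ((i:ℝ)/3)))
      have hone : (((Bp ∪ Bm).ncard : ℝ) / L ^ ((i:ℝ)/3)) * L ^ ((i:ℝ)/3)
          = ((Bp ∪ Bm).ncard : ℝ) :=
        div_mul_cancel₀ _ (ne_of_gt (Real.rpow_pos_of_pos hLpos _))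
      rw [hone] at hmul
      rw [show (((i:ℕ)+1 : ℕ) : ℝ)/3 = (i:ℝ)/3 + 1/3 by push_cast; ring,
        Real.rpow_add hLpos, le_div_iff₀ (mul_pos (Real.rpow_pos_of_pos hLpos _)
          (Real.rpow_pos_of_pos hLpos _))]
      calc (S.ncard : ℝ) * (L ^ ((i:ℝ)/3) * L ^ (1/3 : ℝ))
          = (S.ncard : ℝ) * L ^ (1/3 : ℝ) * L ^ ((i:ℝ)/3) := by ring
        _ ≤ ((Bp ∪ Bm).ncard : ℝ) := hmul
  refine ⟨key, ?_⟩
  -- second conclusion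
  intro i hi
  have h1 := key i
  have hBn : ((Bp ∪ Bm).ncard : ℝ) ≤ (n:ℝ) := by
    have := Set.ncard_le_ncard (Set.subset_univ (Bp ∪ Bm)) (Set.toFinite _)
    have h2 : (Set.univ : Set (Fin n)).ncard = n := by
      rw [Set.ncard_univ]; simp
    rw [h2] at this
    exact_mod_cast this
  -- L ^ ((i-1)/3) ≥ n
  have hexp : (n:ℝ) * L ^ (1/3 : ℝ) ≤ L ^ ((i:ℝ)/3) := by
    have hi1 : L / Real.log L ≤ ((i:ℝ) - 1) / 3 := by
      rw [div_le_div_iff₀ hllpos (by norm_num : (0:ℝ) < 3)]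
      have ha1 : 3 * L / Real.log L ≤ (i:ℝ) - 1 := by linarith
      have ha2 := mul_le_mul_of_nonneg_right ha1 (le_of_lt hllpos)
      rw [div_mul_cancel₀ _ (ne_of_gt hllpos)] at ha2
      linarith
    have h2 : L ^ (((i:ℝ)-1)/3) = Real.exp (Real.log L * (((i:ℝ)-1)/3)) :=
      Real.rpow_def_of_pos hLpos _
    have h3 : L ≤ Real.log L * (((i:ℝ)-1)/3) := by
      have h0 : Real.log L * (L / Real.log L) = L := by field_simp
      have hm := mul_le_mul_of_nonneg_left hi1 (le_of_lt hllpos)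
      rwa [h0] at hm
    have h4 : (n:ℝ) ≤ L ^ (((i:ℝ)-1)/3) := by
      rw [h2]
      calc (n:ℝ) = Real.exp L := by rw [hLdef, Real.exp_log hnpos]
        _ ≤ Real.exp (Real.log L * (((i:ℝ)-1)/3)) := Real.exp_le_exp.mpr h3
    have h5 : L ^ ((i:ℝ)/3) = L ^ (((i:ℝ)-1)/3) * L ^ (1/3:ℝ) := by
      rw [← Real.rpow_add hLpos]; ring_nf
    rw [h5]
    exact mul_le_mul_of_nonneg_right h4 (le_of_lt h13pos)
  have hlt : (((Bp ∪ Bm) \ (Bpi i ∪ Bmi i)).ncard : ℝ) < 1 := by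
    have h2 : ((Bp ∪ Bm).ncard : ℝ) < L ^ ((i:ℝ)/3) := by
      have : (n:ℝ) < (n:ℝ) * L ^ (1/3 : ℝ) := by nlinarith
      linarith
    have h3 : ((Bp ∪ Bm).ncard : ℝ) / L ^ ((i:ℝ)/3) < 1 := by
      rw [div_lt_one (Real.rpow_pos_of_pos hLpos _)]
      exact h2
    linarith
  have hzero : ((Bp ∪ Bm) \ (Bpi i ∪ Bmi i)).ncard = 0 := by
    by_contra hc
    have : 1 ≤ ((Bp ∪ Bm) \ (Bpi i ∪ Bmi i)).ncard := Nat.one_le_iff_ne_zero.mpr hc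
    have : (1:ℝ) ≤ (((Bp ∪ Bm) \ (Bpi i ∪ Bmi i)).ncard : ℝ) := by exact_mod_cast this
    linarith
  exact (Set.ncard_eq_zero (Set.toFinite _)).mp hzero
end
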